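/- arXiv:2207.05562 — 6 statements merged into one kernel-verified Lean document; each statement's English description precedes it below -/
import Mathlib

section
/- (Riemann–Roch for graphs, Baker–Norine) Let G be a finite connected loopless multigraph with genus g = |E| − |V| + 1 and canonical divisor K(v) = deg(v) − 2. Then for every divisor D on G, r(D) − r(K − D) = deg(D) + 1 − g, where r denotes the rank of a divisor. -/
open Finset

/-- The Laplacian of the multigraph with adjacency matrix `A`, applied to `f : V → ℤ`,
evaluated at a vertex `v`:  `(L f) v = deg v * f v - ∑ w, A v w * f w`. -/
def lapApply {V : Type*} [Fintype V] (A : V → V → ℕ) (f : V → ℤ) (v : V) : ℤ :=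
  (∑ w, (A v w : ℤ)) * f v - ∑ w, (A v w : ℤ) * f w

/-- A divisor `D : V → ℤ` is winnable if it is linearly equivalent to an effective
divisor, i.e. `D - L f ≥ 0` for some firing function `f`. -/
def Winnable {V : Type*} [Fintype V] (A : V → V → ℕ) (D : V → ℤ) : Prop :=
  ∃ f : V → ℤ, ∀ v, 0 ≤ D v - lapApply A f v

/-- The Baker–Norine rank of a divisor `D`: the largest integer `r` such that for every
effective divisor `E` of degree `r`, the divisor `D - E` is linearly equivalent to an
effective divisor.  (Every negative integer satisfies the defining condition vacuously,
and the condition is downward closed, so this supremum is `-1` exactly when `D` itself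
is not linearly equivalent to an effective divisor.) -/
noncomputable def divisorRank {V : Type*} [Fintype V] (A : V → V → ℕ) (D : V → ℤ) : ℤ :=
  sSup {r : ℤ | ∀ E : V → ℤ, (∀ v, 0 ≤ E v) → (∑ v, E v) = r →
    Winnable A (fun v => D v - E v)}

set_option linter.unusedSectionVars false
set_option linter.unusedVariables false
set_option linter.unnecessarySeqFocus false
set_option maxHeartbeats 1000000

namespace BN

variable {V : Type*} [Fintype V] [DecidableEq V]

variable {A : V → V → ℕ}



/-- the divisor ν attached to an injective ordering `ord`. -/
def nuD (A : V → V → ℕ) (ord : V → ℕ) (v : V) : ℤ :=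
  (∑ w ∈ univ.filter (fun w => ord w < ord v), (A v w : ℤ)) - 1

/-- positive degree -/
def degp (X : V → ℤ) : ℤ := ∑ v, max (X v) 0


lemma lap_eq_sum (f : V → ℤ) (v : V) :
    lapApply A f v = ∑ w, (A v w : ℤ) * (f v - f w) := by
  simp [lapApply, mul_sub, Finset.sum_sub_distrib, Finset.sum_mul]

lemma lap_add (f g : V → ℤ) (v : V) :
    lapApply A (fun w => f w + g w) v = lapApply A f v + lapApply A g v := by
  simp only [lapApply, mul_add, Finset.sum_add_distrib]; ring

lemma lap_sub (f g : V → ℤ) (v : V) :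
    lapApply A (fun w => f w - g w) v = lapApply A f v - lapApply A g v := by
  simp only [lapApply, mul_sub, Finset.sum_sub_distrib]; ring

lemma lap_neg (f : V → ℤ) (v : V) :
    lapApply A (fun w => - f w) v = - lapApply A f v := by
  simp only [lapApply, mul_neg, Finset.sum_neg_distrib]; ring

lemma lap_zero (v : V) : lapApply A (fun _ => (0:ℤ)) v = 0 := by
  simp [lapApply]

lemma lap_smul (c : ℤ) (f : V → ℤ) (v : V) :
    lapApply A (fun w => c * f w) v = c * lapApply A f v := by
  have h : ∑ w, (A v w : ℤ) * (c * f w) = c * ∑ w, (A v w : ℤ) * f w := by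
    rw [Finset.mul_sum]; exact Finset.sum_congr rfl fun w _ => by ring
  simp only [lapApply, h]; ring

lemma sum_lap (hsymm : ∀ v w, A v w = A w v) (f : V → ℤ) :
    ∑ v, lapApply A f v = 0 := by
  have h1 : ∑ v, (∑ w, (A v w : ℤ)) * f v = ∑ v, ∑ w, (A v w : ℤ) * f v := by
    simp [Finset.sum_mul]
  have h2 : ∑ v, ∑ w, (A v w : ℤ) * f w = ∑ v, ∑ w, (A v w : ℤ) * f v := by
    rw [Finset.sum_comm]
    exact Finset.sum_congr rfl fun a _ => Finset.sum_congr rfl fun b _ => by rw [hsymm]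
  simp [lapApply, Finset.sum_sub_distrib, h1, h2]

lemma winnable_of_nonneg {D : V → ℤ} (h : ∀ v, 0 ≤ D v) : Winnable A D :=
  ⟨fun _ => 0, fun v => by simpa [lap_zero] using h v⟩

lemma winnable_add {D₁ D₂ : V → ℤ} (h₁ : Winnable A D₁) (h₂ : Winnable A D₂) :
    Winnable A (fun v => D₁ v + D₂ v) := by
  obtain ⟨f, hf⟩ := h₁; obtain ⟨g, hg⟩ := h₂
  refine ⟨fun v => f v + g v, fun v => ?_⟩
  have := add_nonneg (hf v) (hg v)
  rw [lap_add]; dsimp only; linarith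

lemma winnable_shift {D : V → ℤ} (f₀ : V → ℤ) :
    Winnable A (fun v => D v - lapApply A f₀ v) ↔ Winnable A D := by
  constructor
  · rintro ⟨f, hf⟩
    refine ⟨fun v => f₀ v + f v, fun v => ?_⟩
    have := hf v; rw [lap_add]; dsimp only at this ⊢; linarith
  · rintro ⟨f, hf⟩
    refine ⟨fun v => f v - f₀ v, fun v => ?_⟩
    have := hf v; rw [lap_sub]; dsimp only at this ⊢; linarith

lemma deg_nonneg_of_winnable (hsymm : ∀ v w, A v w = A w v) {D : V → ℤ}
    (h : Winnable A D) : 0 ≤ ∑ v, D v := by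
  obtain ⟨f, hf⟩ := h
  have h0 : 0 ≤ ∑ v, (D v - lapApply A f v) := Finset.sum_nonneg fun v _ => hf v
  rw [Finset.sum_sub_distrib, sum_lap hsymm] at h0
  linarith

/-- ν is never winnable. -/
lemma nu_not_winnable [Nonempty V] (hsymm : ∀ v w, A v w = A w v) {ord : V → ℕ}
    (hord : Function.Injective ord) : ¬ Winnable A (nuD A ord) := by
  rintro ⟨f, hf⟩
  obtain ⟨b, -, hb⟩ := Finset.exists_max_image (univ : Finset V) f ⟨Classical.arbitrary V, mem_univ _⟩
  obtain ⟨v, hv, hvmin⟩ := Finset.exists_min_image (univ.filter (fun u => f u = f b)) ord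
    ⟨b, by simp⟩
  simp only [mem_filter] at hv
  have hfv : ∀ w, f w ≤ f v := fun w => hv.2 ▸ hb w (mem_univ w)
  have key : ∑ w ∈ univ.filter (fun w => ord w < ord v), (A v w : ℤ) ≤
      ∑ w, (A v w : ℤ) * (f v - f w) := by
    rw [← Finset.sum_filter_add_sum_filter_not univ (fun w => ord w < ord v)
      (fun w => (A v w : ℤ) * (f v - f w))]
    have h1 : ∑ w ∈ univ.filter (fun w => ord w < ord v), (A v w : ℤ) ≤
        ∑ w ∈ univ.filter (fun w => ord w < ord v), (A v w : ℤ) * (f v - f w) := by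
      apply Finset.sum_le_sum
      intro w hw
      simp only [mem_filter] at hw
      have hwne : f w ≠ f b := by
        intro hfb
        have := hvmin w (by simp [hfb])
        omega
      have : f w < f v := lt_of_le_of_ne (hfv w) (fun hh => hwne (hh ▸ hv.2))
      have h1 : 1 ≤ f v - f w := by omega
      calc (A v w : ℤ) = (A v w : ℤ) * 1 := by ring
        _ ≤ (A v w : ℤ) * (f v - f w) := by
            apply mul_le_mul_of_nonneg_left h1 (by positivity)
    have h2 : 0 ≤ ∑ w ∈ univ.filter (fun w => ¬ ord w < ord v), (A v w : ℤ) * (f v - f w) :=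
      Finset.sum_nonneg fun w _ => mul_nonneg (by positivity) (by have := hfv w; omega)
    linarith
  have := hf v
  rw [lap_eq_sum] at this
  simp only [nuD] at this
  linarith




/-- sum over pairs with `ord w < ord v` is half the total. -/
lemma sum_lt_pairs (hsymm : ∀ v w, A v w = A w v) (hdiag : ∀ v, A v v = 0)
    {ord : V → ℕ} (hord : Function.Injective ord) :
    2 * ∑ v, ∑ w ∈ univ.filter (fun w => ord w < ord v), (A v w : ℤ)
      = ∑ v, ∑ w, (A v w : ℤ) := by
  have hswap : ∑ v, ∑ w ∈ univ.filter (fun w => ord w < ord v), (A v w : ℤ)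
      = ∑ v, ∑ w ∈ univ.filter (fun w => ord v < ord w), (A v w : ℤ) := by
    simp only [Finset.sum_filter]
    rw [Finset.sum_comm]
    exact Finset.sum_congr rfl fun a _ => Finset.sum_congr rfl fun b _ => by
      rw [hsymm]
  have hsplit : ∀ v, ∑ w, (A v w : ℤ)
      = (∑ w ∈ univ.filter (fun w => ord w < ord v), (A v w : ℤ))
        + ∑ w ∈ univ.filter (fun w => ord v < ord w), (A v w : ℤ) := by
    intro v
    rw [← Finset.sum_filter_add_sum_filter_not univ (fun w => ord w < ord v)
      (fun w => (A v w : ℤ))]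
    congr 1
    have : univ.filter (fun w => ¬ ord w < ord v)
        = insert v (univ.filter (fun w => ord v < ord w)) := by
      ext w
      simp only [mem_filter, mem_univ, true_and, mem_insert, not_lt]
      constructor
      · intro h
        rcases eq_or_lt_of_le h with h' | h'
        · exact Or.inl (hord h'.symm)
        · exact Or.inr h'
      · rintro (rfl | h) <;> omega
    rw [this, Finset.sum_insert (by simp), hdiag]
    simp
  calc 2 * ∑ v, ∑ w ∈ univ.filter (fun w => ord w < ord v), (A v w : ℤ)
      = (∑ v, ∑ w ∈ univ.filter (fun w => ord w < ord v), (A v w : ℤ))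
        + ∑ v, ∑ w ∈ univ.filter (fun w => ord v < ord w), (A v w : ℤ) := by
        rw [← hswap]; ring
    _ = ∑ v, ∑ w, (A v w : ℤ) := by
        rw [← Finset.sum_add_distrib]
        exact (Finset.sum_congr rfl fun v _ => (hsplit v).symm)

lemma deg_nu (hsymm : ∀ v w, A v w = A w v) (hdiag : ∀ v, A v v = 0)
    {ord : V → ℕ} (hord : Function.Injective ord) {g : ℤ}
    (hg : 2 * g = (∑ v, ∑ w, (A v w : ℤ)) - 2 * (Fintype.card V : ℤ) + 2) :
    ∑ v, nuD A ord v = g - 1 := by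
  have h := sum_lt_pairs hsymm hdiag hord
  have : ∑ v, nuD A ord v
      = (∑ v, ∑ w ∈ univ.filter (fun w => ord w < ord v), (A v w : ℤ))
        - (Fintype.card V : ℤ) := by
    simp [nuD, Finset.sum_sub_distrib, Finset.card_univ]
  omega

/-- reversal of an ordering -/
def revOrd (ord : V → ℕ) : V → ℕ := fun v => (∑ w, ord w) - ord v

lemma ord_le_total (ord : V → ℕ) (v : V) : ord v ≤ ∑ w, ord w :=
  Finset.single_le_sum (fun w _ => Nat.zero_le _) (mem_univ v)

lemma revOrd_lt_iff {ord : V → ℕ} (v w : V) :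
    revOrd ord w < revOrd ord v ↔ ord v < ord w := by
  have h1 := ord_le_total ord v
  have h2 := ord_le_total ord w
  simp only [revOrd]; omega

lemma revOrd_inj {ord : V → ℕ} (hord : Function.Injective ord) :
    Function.Injective (revOrd ord) := by
  intro a b h
  have h1 := ord_le_total ord a
  have h2 := ord_le_total ord b
  simp only [revOrd] at h
  exact hord (by omega)

/-- `K - ν_ord = ν_(rev ord)` pointwise. -/
lemma K_sub_nu (hsymm : ∀ v w, A v w = A w v) (hdiag : ∀ v, A v v = 0)
    {ord : V → ℕ} (hord : Function.Injective ord) (v : V) :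
    ((∑ w, (A v w : ℤ)) - 2) - nuD A ord v = nuD A (revOrd ord) v := by
  have hrev : univ.filter (fun w => revOrd ord w < revOrd ord v)
      = univ.filter (fun w => ord v < ord w) := by
    ext w; simp [revOrd_lt_iff]
  have hsplit : univ.filter (fun w => ¬ ord w < ord v)
      = insert v (univ.filter (fun w => ord v < ord w)) := by
    ext w
    simp only [mem_filter, mem_univ, true_and, mem_insert, not_lt]
    constructor
    · intro h
      rcases eq_or_lt_of_le h with h' | h'
      · exact Or.inl (hord h'.symm)
      · exact Or.inr h'
    · rintro (rfl | h) <;> omega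
  have htot : ∑ w, (A v w : ℤ)
      = (∑ w ∈ univ.filter (fun w => ord w < ord v), (A v w : ℤ))
        + ∑ w ∈ univ.filter (fun w => ord v < ord w), (A v w : ℤ) := by
    rw [← Finset.sum_filter_add_sum_filter_not univ (fun w => ord w < ord v)
      (fun w => (A v w : ℤ))]
    congr 1
    rw [hsplit, Finset.sum_insert (by simp), hdiag]
    simp
  simp only [nuD, hrev]
  omega

/-- double reversal gives the same ν. -/
lemma nu_revrev {ord : V → ℕ} (hord : Function.Injective ord) :
    nuD A (revOrd (revOrd ord)) = nuD A ord := by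
  funext v
  simp only [nuD]
  congr 1
  apply Finset.sum_congr _ (fun _ _ => rfl)
  ext w
  simp only [mem_filter, mem_univ, true_and]
  rw [revOrd_lt_iff, revOrd_lt_iff]



def lapQ (A : V → V → ℕ) (f : V → ℚ) (v : V) : ℚ :=
  (∑ w, (A v w : ℚ)) * f v - ∑ w, (A v w : ℚ) * f w


lemma lapQ_cast (F : V → ℤ) (v : V) :
    lapQ A (fun w => (F w : ℚ)) v = ((lapApply A F v : ℤ) : ℚ) := by
  simp [lapQ, lapApply]

lemma lapQ_smul (c : ℚ) (f : V → ℚ) (v : V) : lapQ A (c • f) v = c * lapQ A f v := by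
  have h : ∑ w, (A v w : ℚ) * (c * f w) = c * ∑ w, (A v w : ℚ) * f w := by
    rw [Finset.mul_sum]
    exact Finset.sum_congr rfl fun w _ => by ring
  simp only [lapQ, Pi.smul_apply, smul_eq_mul, h]; ring

def psi (A : V → V → ℕ) (q : V) : (V → ℚ) →ₗ[ℚ] (V → ℚ) where
  toFun f := fun v => if v = q then f q else lapQ A f v
  map_add' f g := by
    funext v
    by_cases h : v = q <;> simp [h, lapQ, mul_add, Finset.sum_add_distrib] <;> ring
  map_smul' c f := by
    funext v
    by_cases h : v = q
    · simp [h, smul_eq_mul]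
    · simp only [RingHom.id_apply, Pi.smul_apply, smul_eq_mul, h, if_neg, ite_false]
      exact lapQ_smul c f v

lemma quad (hsymm : ∀ v w, A v w = A w v) (f : V → ℚ) :
    ∑ v, ∑ w, (A v w : ℚ) * (f v - f w)^2 = 2 * ∑ v, f v * lapQ A f v := by
  have hswap : ∑ v, ∑ w, (A v w : ℚ) * f w ^ 2 = ∑ v, ∑ w, (A v w : ℚ) * f v ^ 2 := by
    rw [Finset.sum_comm]
    exact Finset.sum_congr rfl fun a _ => Finset.sum_congr rfl fun b _ => by rw [hsymm]
  have expand : ∀ v w, (A v w : ℚ) * (f v - f w)^2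
      = (A v w : ℚ) * f v ^ 2 + (A v w : ℚ) * f w ^ 2 - 2 * ((A v w : ℚ) * (f v * f w)) :=
    fun v w => by ring
  have hlap : ∀ v, f v * lapQ A f v
      = (∑ w, (A v w : ℚ) * f v ^ 2) - ∑ w, (A v w : ℚ) * (f v * f w) := by
    intro v
    simp only [lapQ, mul_sub, Finset.sum_mul, Finset.mul_sum]
    congr 1
    · exact Finset.sum_congr rfl fun w _ => by ring
    · exact Finset.sum_congr rfl fun w _ => by ring
  have lhs_eq : ∑ v, ∑ w, (A v w:ℚ) * (f v - f w)^2
      = ((∑ v, ∑ w, (A v w:ℚ) * f v^2) + (∑ v, ∑ w, (A v w:ℚ) * f w^2))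
        - ∑ v, ∑ w, 2 * ((A v w:ℚ) * (f v * f w)) := by
    rw [← Finset.sum_add_distrib, ← Finset.sum_sub_distrib]
    refine Finset.sum_congr rfl fun v _ => ?_
    rw [← Finset.sum_add_distrib, ← Finset.sum_sub_distrib]
    exact Finset.sum_congr rfl fun w _ => by ring
  have rhs_eq : ∑ v, f v * lapQ A f v
      = (∑ v, ∑ w, (A v w:ℚ) * f v^2) - ∑ v, ∑ w, (A v w:ℚ) * (f v * f w) := by
    rw [← Finset.sum_sub_distrib]
    exact Finset.sum_congr rfl fun v _ => hlap v
  have hmul2 : ∑ v, ∑ w, 2 * ((A v w:ℚ) * (f v * f w))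
      = 2 * ∑ v, ∑ w, (A v w:ℚ) * (f v * f w) := by
    rw [Finset.mul_sum]
    refine Finset.sum_congr rfl fun v _ => ?_
    rw [Finset.mul_sum]
  rw [lhs_eq, rhs_eq, hswap, hmul2]
  ring
  
lemma walk_const {G : SimpleGraph V} {f : V → ℚ} (h : ∀ a b, G.Adj a b → f a = f b) :
    ∀ {u v : V}, G.Walk u v → f u = f v := by
  intro u v p
  induction p with
  | nil => rfl
  | cons ha p ih => exact (h _ _ ha).trans ih

lemma psi_inj (hsymm : ∀ v w, A v w = A w v)
    (hconn : (SimpleGraph.fromRel fun v w => 0 < A v w).Connected) (q : V) :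
    Function.Injective (psi A q) := by
  rw [← LinearMap.ker_eq_bot]
  rw [LinearMap.ker_eq_bot']
  intro f hf
  have hfq : f q = 0 := by
    have := congrFun hf q
    simpa [psi] using this
  have hlap0 : ∀ v, v ≠ q → lapQ A f v = 0 := by
    intro v hv
    have := congrFun hf v
    simpa [psi, hv] using this
  have hsum0 : ∑ v, f v * lapQ A f v = 0 := by
    apply Finset.sum_eq_zero
    intro v _
    by_cases h : v = q
    · subst h; rw [hfq]; ring
    · rw [hlap0 v h]; ring
  have hq : ∑ v, ∑ w, (A v w : ℚ) * (f v - f w)^2 = 0 := by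
    rw [quad hsymm, hsum0]; ring
  have hterm : ∀ v w, 0 < A v w → f v = f w := by
    intro v w hvw
    have h1 : ∀ v ∈ (univ : Finset V), (0:ℚ) ≤ ∑ w, (A v w : ℚ) * (f v - f w)^2 :=
      fun v _ => Finset.sum_nonneg fun w _ => mul_nonneg (by positivity) (sq_nonneg _)
    have h2 := (Finset.sum_eq_zero_iff_of_nonneg h1).mp hq v (mem_univ v)
    have h3 : ∀ w ∈ (univ : Finset V), (0:ℚ) ≤ (A v w : ℚ) * (f v - f w)^2 :=
      fun w _ => mul_nonneg (by positivity) (sq_nonneg _)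
    have h4 := (Finset.sum_eq_zero_iff_of_nonneg h3).mp h2 w (mem_univ w)
    rcases mul_eq_zero.mp h4 with h | h
    · exfalso
      have : (A v w : ℚ) ≠ 0 := Nat.cast_ne_zero.mpr hvw.ne'
      exact this h
    · have := pow_eq_zero_iff (n := 2) (by norm_num) |>.mp h
      linarith [sub_eq_zero.mp this]
  have hconst : ∀ v, f v = f q := by
    intro v
    obtain ⟨p⟩ := hconn.preconnected v q
    refine walk_const ?_ p
    intro a b hab
    rw [SimpleGraph.fromRel_adj] at hab
    rcases hab.2 with h | h
    · exact hterm a b h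
    · exact hterm a b (by rw [hsymm]; exact h)
  funext v
  rw [hconst v, hfq]; rfl

lemma exists_borrow (hsymm : ∀ v w, A v w = A w v)
    (hconn : (SimpleGraph.fromRel fun v w => 0 < A v w).Connected) (q : V) :
    ∃ (F : V → ℤ) (m : ℕ), 0 < m ∧ ∀ v, v ≠ q → lapApply A F v = -(m:ℤ) := by
  have hinj := psi_inj hsymm hconn q
  have hsurj := LinearMap.injective_iff_surjective.mp hinj
  obtain ⟨x, hx⟩ := hsurj (fun v => if v = q then 0 else -1)
  have hxlap : ∀ v, v ≠ q → lapQ A x v = -1 := by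
    intro v hv
    have := congrFun hx v
    simpa [psi, hv] using this
  set m : ℕ := ∏ v, (x v).den with hm
  have hmpos : 0 < m := Finset.prod_pos fun v _ => (x v).pos
  have hdvd : ∀ v, (x v).den ∣ m := fun v => Finset.dvd_prod_of_mem _ (mem_univ v)
  set F : V → ℤ := fun v => (m / (x v).den : ℕ) * (x v).num with hF
  have hFval : ∀ v, ((F v : ℤ) : ℚ) = (m : ℚ) * x v := by
    intro v
    obtain ⟨c, hc⟩ := hdvd v
    have hdpos : 0 < (x v).den := (x v).pos
    have hdiv : m / (x v).den = c := by rw [hc]; exact Nat.mul_div_cancel_left _ hdpos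
    have h1 : ((x v).den : ℚ) * x v = ((x v).num : ℚ) := by
      rw [mul_comm]
      exact_mod_cast Rat.mul_den_eq_num (x v)
    have h2 : ((F v : ℤ) : ℚ) = (c : ℚ) * ((x v).num : ℚ) := by
      rw [hF]
      push_cast [hdiv]
      ring
    rw [h2, ← h1, hc]
    push_cast
    ring
  have hcast : (fun w => ((F w : ℤ) : ℚ)) = fun w => (m : ℚ) * x w := funext hFval
  refine ⟨F, m, hmpos, fun v hv => ?_⟩
  have : ((lapApply A F v : ℤ) : ℚ) = -(m : ℚ) := by
    rw [← lapQ_cast, hcast]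
    have hlin : lapQ A (fun w => (m:ℚ) * x w) v = (m:ℚ) * lapQ A x v := by
      have h : ∑ w, (A v w : ℚ) * ((m:ℚ) * x w) = (m:ℚ) * ∑ w, (A v w : ℚ) * x w := by
        rw [Finset.mul_sum]
        exact Finset.sum_congr rfl fun w _ => by ring
      simp only [lapQ, h]; ring
    rw [hlin, hxlap v hv]
    ring
  exact_mod_cast this

lemma exists_eff_off_q (hsymm : ∀ v w, A v w = A w v)
    (hconn : (SimpleGraph.fromRel fun v w => 0 < A v w).Connected) (q : V) (D : V → ℤ) :
    ∃ f : V → ℤ, ∀ v, v ≠ q → 0 ≤ D v - lapApply A f v := by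
  obtain ⟨F, m, hm, hFlap⟩ := exists_borrow hsymm hconn q
  set k : ℕ := ∑ v, (D v).natAbs with hk
  refine ⟨fun v => (k : ℤ) * F v, fun v hv => ?_⟩
  have hlapk : lapApply A (fun v => (k:ℤ) * F v) v = (k:ℤ) * lapApply A F v := by
    have h : ∑ w, (A v w : ℤ) * ((k:ℤ) * F w) = (k:ℤ) * ∑ w, (A v w : ℤ) * F w := by
      rw [Finset.mul_sum]; exact Finset.sum_congr rfl fun w _ => by ring
    simp only [lapApply, h]; ring
  rw [hlapk, hFlap v hv, mul_neg]
  have h1 : (D v).natAbs ≤ k :=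
    Finset.single_le_sum (f := fun v => (D v).natAbs) (fun w _ => Nat.zero_le _) (mem_univ v)
  have h2 : (k:ℤ) * 1 ≤ (k:ℤ) * m := by
    apply mul_le_mul_of_nonneg_left (by exact_mod_cast hm) (by positivity)
  rw [mul_one] at h2
  omega




def GG (A : V → V → ℕ) : SimpleGraph V := SimpleGraph.fromRel fun v w => 0 < A v w

noncomputable def dd (A : V → V → ℕ) (q v : V) : ℕ := (GG A).dist q v


lemma dd_self (q : V) : dd A q q = 0 := SimpleGraph.dist_self

lemma dd_pos (hconn : (GG A).Connected) {q v : V} (h : v ≠ q) : 1 ≤ dd A q v :=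
  hconn.pos_dist_of_ne (Ne.symm h)

lemma dd_lt (hconn : (GG A).Connected) (q v : V) : dd A q v < Fintype.card V := by
  obtain ⟨p⟩ := hconn.preconnected q v
  calc dd A q v ≤ p.bypass.length := SimpleGraph.dist_le _
    _ < Fintype.card V := p.bypass_isPath.length_lt

lemma dd_pred (hsymm : ∀ v w, A v w = A w v) (hconn : (GG A).Connected)
    {q v : V} (h : v ≠ q) : ∃ w, 0 < A v w ∧ dd A q w < dd A q v := by
  obtain ⟨p, hp⟩ := (hconn.preconnected v q).exists_walk_length_eq_dist
  cases p with
  | nil => exact absurd rfl h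
  | @cons _ w _ ha p' =>
    refine ⟨w, ?_, ?_⟩
    · rw [GG, SimpleGraph.fromRel_adj] at ha
      rcases ha.2 with h' | h'
      · exact h'
      · rw [hsymm]; exact h'
    · have h1 : (GG A).dist w q ≤ p'.length := SimpleGraph.dist_le _
      have h2 : (GG A).dist v q = p'.length + 1 := by
        rw [← hp]; simp [SimpleGraph.Walk.length_cons]
      have h3 : dd A q w = (GG A).dist w q := SimpleGraph.dist_comm ..
      have h4 : dd A q v = (GG A).dist v q := SimpleGraph.dist_comm ..
      omega

/-! ### burning order -/

def Qprop (A : V → V → ℕ) (q : V) (D : V → ℤ) (B : Finset V) : Prop :=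
  ∃ ord : V → ℕ, Function.Injective ord ∧ (∀ v, ord v < B.card ↔ v ∈ B) ∧
    (∀ v, ord v = 0 ↔ v = q) ∧
    ∀ v ∈ B, v ≠ q → D v < ∑ w ∈ univ.filter (fun w => ord w < ord v), (A v w : ℤ)

lemma Qprop_base (q : V) (D : V → ℤ) : Qprop A q D {q} := by
  classical
  let e := Fintype.equivFin V
  refine ⟨fun v => if v = q then 0 else (e v : ℕ) + 1, ?_, ?_, ?_, ?_⟩
  · intro a b hab
    by_cases ha : a = q <;> by_cases hb : b = q
    · rw [ha, hb]
    · simp [ha, hb] at hab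
    · simp [ha, hb] at hab
    · simp [ha, hb] at hab
      exact e.injective (Fin.ext hab)
  · intro v
    by_cases hv : v = q <;> simp [hv]
  · intro v
    by_cases hv : v = q <;> simp [hv]
  · intro v hv hvq
    simp at hv
    exact absurd hv hvq

lemma Qprop_step (q : V) (D : V → ℤ) {B : Finset V} (hqB : q ∈ B)
    (hQ : Qprop A q D B) {u₀ : V} (hu₀ : u₀ ∉ B)
    (hcond : D u₀ < ∑ w ∈ B, (A u₀ w : ℤ)) : Qprop A q D (insert u₀ B) := by
  obtain ⟨ord, hinj, hblock, hzero, hmain⟩ := hQ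
  have hin : ∀ v ∈ B, ord v < B.card := fun v hv => (hblock v).mpr hv
  have hout : ∀ v, v ∉ B → B.card ≤ ord v := fun v hv => by
    by_contra h; exact hv ((hblock v).mp (by omega))
  set ord₂ : V → ℕ := fun v => if v ∈ B then ord v else if v = u₀ then B.card else ord v + 1
    with hord₂
  have hcard : (insert u₀ B).card = B.card + 1 := Finset.card_insert_of_notMem hu₀
  have hval : ∀ v ∈ B, ord₂ v = ord v := fun v hv => by simp [hord₂, hv]
  have hvalu : ord₂ u₀ = B.card := by simp [hord₂, hu₀]
  have hvalout : ∀ v, v ∉ B → v ≠ u₀ → ord₂ v = ord v + 1 := fun v h1 h2 => by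
    simp [hord₂, h1, h2]
  refine ⟨ord₂, ?_, ?_, ?_, ?_⟩
  · intro a b hab
    by_cases ha : a ∈ B <;> by_cases hb : b ∈ B
    · rw [hval a ha, hval b hb] at hab; exact hinj hab
    · by_cases hb' : b = u₀
      · rw [hval a ha, hb', hvalu] at hab; exact absurd hab (by have := hin a ha; omega)
      · rw [hval a ha, hvalout b hb hb'] at hab
        have := hin a ha; have := hout b hb; omega
    · by_cases ha' : a = u₀
      · rw [ha', hvalu, hval b hb] at hab; exact absurd hab.symm (by have := hin b hb; omega)
      · rw [hvalout a ha ha', hval b hb] at hab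
        have := hin b hb; have := hout a ha; omega
    · by_cases ha' : a = u₀ <;> by_cases hb' : b = u₀
      · rw [ha', hb']
      · rw [ha', hvalu, hvalout b hb hb'] at hab; have := hout b hb; omega
      · rw [hb', hvalu, hvalout a ha ha'] at hab; have := hout a ha; omega
      · rw [hvalout a ha ha', hvalout b hb hb'] at hab; exact hinj (by omega)
  · intro v
    rw [hcard]
    by_cases hv : v ∈ B
    · rw [hval v hv, Finset.mem_insert]
      have := hin v hv
      constructor
      · intro _; exact Or.inr hv
      · intro _; omega
    · by_cases hv' : v = u₀
      · subst hv'; rw [hvalu]; simp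
      · rw [hvalout v hv hv', Finset.mem_insert]
        have := hout v hv
        constructor
        · intro h; exact absurd h (by omega)
        · rintro (h | h)
          · exact absurd h hv'
          · exact absurd h hv
  · intro v
    by_cases hv : v ∈ B
    · rw [hval v hv]; exact hzero v
    · by_cases hv' : v = u₀
      · subst hv'; rw [hvalu]
        constructor
        · intro h; exfalso; have : q ∈ B := hqB; have := Finset.card_pos.mpr ⟨q, hqB⟩; omega
        · intro h; exact absurd (h ▸ hqB) hu₀
      · rw [hvalout v hv hv']
        constructor
        · omega
        · intro h; subst h; exact absurd hqB hv
  · intro v hv hvq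
    rcases Finset.mem_insert.mp hv with hv' | hvB
    · rw [hv']
      have hfilter : univ.filter (fun w => ord₂ w < ord₂ u₀) = B := by
        ext w
        simp only [mem_filter, mem_univ, true_and, hvalu]
        constructor
        · intro hw
          by_contra hwB
          by_cases hw' : w = u₀
          · subst hw'; rw [hvalu] at hw; omega
          · rw [hvalout w hwB hw'] at hw; have := hout w hwB; omega
        · intro hw; rw [hval w hw]; exact hin w hw
      rw [hfilter]; exact hcond
    · have hfilter : univ.filter (fun w => ord₂ w < ord₂ v)
          = univ.filter (fun w => ord w < ord v) := by
        ext w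
        simp only [mem_filter, mem_univ, true_and]
        rw [hval v hvB]
        have hvlt := hin v hvB
        by_cases hw : w ∈ B
        · rw [hval w hw]
        · by_cases hw' : w = u₀
          · subst hw'; rw [hvalu]
            have := hout w hw
            constructor <;> intro h <;> omega
          · rw [hvalout w hw hw']
            have := hout w hw
            constructor <;> intro h <;> omega
      rw [hfilter]
      exact hmain v hvB hvq

lemma Qprop_univ (q : V) (D : V → ℤ)
    (hns : ∀ S : Finset V, S.Nonempty → q ∉ S →
      ∃ v ∈ S, D v < ∑ w ∈ univ.filter (fun w => w ∉ S), (A v w : ℤ)) :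
    Qprop A q D univ := by
  suffices h : ∀ k (B : Finset V), q ∈ B → Fintype.card V - B.card = k →
      Qprop A q D B → Qprop A q D univ by
    exact h (Fintype.card V - 1) {q} (mem_singleton_self q) (by simp) (Qprop_base q D)
  intro k
  induction k with
  | zero =>
    intro B hqB hcard hQ
    have hle : B.card ≤ Fintype.card V := B.card_le_univ
    have : B = univ := Finset.eq_univ_of_card B (by omega)
    exact this ▸ hQ
  | succ k ih =>
    intro B hqB hcard hQ
    set S : Finset V := univ \ B with hSdef
    have hScard : S.card = Fintype.card V - B.card := by
      rw [hSdef, Finset.card_sdiff_of_subset (subset_univ _), Finset.card_univ]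
    have hSne : S.Nonempty := Finset.card_pos.mp (by omega)
    have hqS : q ∉ S := by simp [hSdef, hqB]
    obtain ⟨u₀, hu₀S, hu₀⟩ := hns S hSne hqS
    have hu₀B : u₀ ∉ B := by
      intro h; simp [hSdef] at hu₀S; exact hu₀S h
    have hfilter : univ.filter (fun w => w ∉ S) = B := by
      ext w; simp [hSdef]
    rw [hfilter] at hu₀
    have hQ' := Qprop_step q D hqB hQ hu₀B hu₀
    have hcard' : Fintype.card V - (insert u₀ B).card = k := by
      have h1 : (insert u₀ B).card = B.card + 1 := Finset.card_insert_of_notMem hu₀B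
      have h2 : (insert u₀ B).card ≤ Fintype.card V := Finset.card_le_univ _
      omega
    exact ih (insert u₀ B) (Finset.mem_insert_of_mem hqB) hcard' hQ'

lemma exists_burning_order (q : V) (D : V → ℤ)
    (hns : ∀ S : Finset V, S.Nonempty → q ∉ S →
      ∃ v ∈ S, D v < ∑ w ∈ univ.filter (fun w => w ∉ S), (A v w : ℤ)) :
    ∃ ord : V → ℕ, Function.Injective ord ∧ (∀ v, ord v = 0 ↔ v = q) ∧
      ∀ v, v ≠ q → D v < ∑ w ∈ univ.filter (fun w => ord w < ord v), (A v w : ℤ) := by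
  obtain ⟨ord, hinj, _, hzero, hmain⟩ := Qprop_univ q D hns
  exact ⟨ord, hinj, hzero, fun v hv => hmain v (mem_univ v) hv⟩

/-! ### firing a set -/

def fireSet (S : Finset V) : V → ℤ := fun v => if v ∈ S then 1 else 0

lemma lap_fire (S : Finset V) (v : V) :
    lapApply A (fireSet S) v = if v ∈ S then ∑ w ∈ univ.filter (fun w => w ∉ S), (A v w : ℤ)
      else - ∑ w ∈ S, (A v w : ℤ) := by
  have hsum : ∑ w, (A v w : ℤ) * fireSet S w = ∑ w ∈ S, (A v w : ℤ) := by
    simp [fireSet, mul_ite, Finset.sum_ite_mem]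
  have hsplit : ∑ w, (A v w : ℤ)
      = (∑ w ∈ univ.filter (fun w => w ∈ S), (A v w : ℤ))
        + ∑ w ∈ univ.filter (fun w => w ∉ S), (A v w : ℤ) :=
    (Finset.sum_filter_add_sum_filter_not univ _ _).symm
  have hfS : univ.filter (fun w => w ∈ S) = S := by ext w; simp
  rw [hfS] at hsplit
  by_cases hv : v ∈ S
  · rw [if_pos hv]
    simp only [lapApply]
    rw [hsum, show fireSet S v = 1 from if_pos hv, hsplit]
    ring
  · rw [if_neg hv]
    simp only [lapApply]
    rw [hsum, show fireSet S v = 0 from if_neg hv]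
    ring

/-- the sum of the firing Laplacian over a set `W` containing `S` is nonnegative;
more precisely it equals `(edges from S to outside S) - (edges from S to W \ S)`. -/
lemma sum_lap_fire_on (hsymm : ∀ v w, A v w = A w v) {S W : Finset V} (hSW : S ⊆ W) :
    ∑ v ∈ W, lapApply A (fireSet S) v
      = (∑ u ∈ S, ∑ w ∈ univ.filter (fun w => w ∉ S), (A u w : ℤ))
        - ∑ u ∈ S, ∑ w ∈ W.filter (fun w => w ∉ S), (A u w : ℤ) := by
  rw [← Finset.sum_filter_add_sum_filter_not W (fun v => v ∈ S) (lapApply A (fireSet S))]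
  have hWS : W.filter (fun v => v ∈ S) = S := by
    ext w; simp only [mem_filter]
    exact ⟨fun h => h.2, fun h => ⟨hSW h, h⟩⟩
  rw [hWS]
  have h1 : ∑ v ∈ S, lapApply A (fireSet S) v
      = ∑ u ∈ S, ∑ w ∈ univ.filter (fun w => w ∉ S), (A u w : ℤ) := by
    refine Finset.sum_congr rfl fun v hv => ?_
    rw [lap_fire, if_pos hv]
  have h2 : ∑ v ∈ W.filter (fun v => v ∉ S), lapApply A (fireSet S) v
      = - ∑ v ∈ W.filter (fun v => v ∉ S), ∑ w ∈ S, (A v w : ℤ) := by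
    rw [← Finset.sum_neg_distrib]
    refine Finset.sum_congr rfl fun v hv => ?_
    rw [lap_fire, if_neg (mem_filter.mp hv).2]
  have h3 : ∑ v ∈ W.filter (fun v => v ∉ S), ∑ w ∈ S, (A v w : ℤ)
      = ∑ u ∈ S, ∑ w ∈ W.filter (fun w => w ∉ S), (A u w : ℤ) := by
    rw [Finset.sum_comm]
    exact Finset.sum_congr rfl fun u _ => Finset.sum_congr rfl fun w _ => by rw [hsymm]
  rw [h1, h2, h3]
  ring

lemma sum_lap_fire_on_nonneg (hsymm : ∀ v w, A v w = A w v) {S W : Finset V} (hSW : S ⊆ W) :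
    0 ≤ ∑ v ∈ W, lapApply A (fireSet S) v := by
  rw [sum_lap_fire_on hsymm hSW]
  have : ∀ u ∈ S, ∑ w ∈ W.filter (fun w => w ∉ S), (A u w : ℤ)
      ≤ ∑ w ∈ univ.filter (fun w => w ∉ S), (A u w : ℤ) := by
    intro u _
    apply Finset.sum_le_sum_of_subset_of_nonneg
    · intro w hw; simp only [mem_filter] at hw ⊢; exact ⟨mem_univ w, hw.2⟩
    · intro w _ _; positivity
  have := Finset.sum_le_sum this
  linarith

/-! ### the potential function -/

noncomputable def Phi (A : V → V → ℕ) (q : V) (j : ℕ) (D : V → ℤ) : ℤ :=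
  ∑ v ∈ univ.filter (fun v => j ≤ dd A q v), D v

noncomputable def mu (A : V → V → ℕ) (q : V) (T : ℕ) (D : V → ℤ) : ℤ :=
  ∑ j ∈ Finset.Ioc 0 (Fintype.card V),
    Phi A q j D * ((T : ℤ) + 1) ^ (Fintype.card V - j)

lemma Phi_nonneg {q : V} {D : V → ℤ} (hinv : ∀ v, v ≠ q → 0 ≤ D v) {j : ℕ} (hj : 1 ≤ j) :
    0 ≤ Phi A q j D := by
  apply Finset.sum_nonneg
  intro v hv
  simp only [mem_filter] at hv
  apply hinv
  intro h
  rw [h, dd_self] at hv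
  omega

lemma Phi_le {q : V} {D : V → ℤ} (hinv : ∀ v, v ≠ q → 0 ≤ D v) {T : ℕ}
    (hT : ∑ v ∈ univ.erase q, D v ≤ (T : ℤ)) {j : ℕ} (hj : 1 ≤ j) :
    Phi A q j D ≤ (T : ℤ) := by
  refine le_trans ?_ hT
  apply Finset.sum_le_sum_of_subset_of_nonneg
  · intro v hv
    simp only [mem_filter] at hv
    simp only [Finset.mem_erase, mem_univ, and_true]
    intro h
    rw [h, dd_self] at hv
    omega
  · intro v hv _
    exact hinv v (Finset.ne_of_mem_erase hv)

lemma mu_nonneg {q : V} {D : V → ℤ} (hinv : ∀ v, v ≠ q → 0 ≤ D v) (T : ℕ) :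
    0 ≤ mu A q T D := by
  apply Finset.sum_nonneg
  intro j hj
  simp only [Finset.mem_Ioc] at hj
  exact mul_nonneg (Phi_nonneg hinv hj.1) (by positivity)


lemma Phi_fire_le (hsymm : ∀ v w, A v w = A w v) {q : V} {S : Finset V} (D : V → ℤ) {j : ℕ}
    (hSj : ∀ u ∈ S, j ≤ dd A q u) :
    Phi A q j (fun v => D v - lapApply A (fireSet S) v) ≤ Phi A q j D := by
  have heq : Phi A q j (fun v => D v - lapApply A (fireSet S) v)
      = Phi A q j D - ∑ v ∈ univ.filter (fun v => j ≤ dd A q v), lapApply A (fireSet S) v := by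
    simp [Phi, Finset.sum_sub_distrib]
  have hSW : S ⊆ univ.filter (fun v => j ≤ dd A q v) := fun u hu => by
    simp only [mem_filter]; exact ⟨mem_univ u, hSj u hu⟩
  have := sum_lap_fire_on_nonneg (A := A) hsymm hSW
  rw [heq]; linarith

lemma Phi_fire_lt (hsymm : ∀ v w, A v w = A w v) (hconn : (GG A).Connected)
    {q : V} {S : Finset V} (hqS : q ∉ S) (D : V → ℤ)
    {u₁ : V} (hu₁ : u₁ ∈ S) (hmin : ∀ u ∈ S, dd A q u₁ ≤ dd A q u) :
    Phi A q (dd A q u₁) (fun v => D v - lapApply A (fireSet S) v)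
      ≤ Phi A q (dd A q u₁) D - 1 := by
  set j := dd A q u₁ with hj
  set W := univ.filter (fun v => j ≤ dd A q v) with hW
  have hSW : S ⊆ W := fun u hu => by
    simp only [hW, mem_filter]; exact ⟨mem_univ u, hmin u hu⟩
  have heq : Phi A q j (fun v => D v - lapApply A (fireSet S) v)
      = Phi A q j D - ∑ v ∈ W, lapApply A (fireSet S) v := by
    simp [Phi, Finset.sum_sub_distrib, hW]
  rw [heq]
  suffices h : 1 ≤ ∑ v ∈ W, lapApply A (fireSet S) v by linarith
  rw [sum_lap_fire_on hsymm hSW]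
  have hu₁q : u₁ ≠ q := fun h => hqS (h ▸ hu₁)
  obtain ⟨w₀, hw₀A, hw₀d⟩ := dd_pred hsymm hconn hu₁q
  have hw₀S : w₀ ∉ S := fun h => by have := hmin w₀ h; omega
  have hw₀W : w₀ ∉ W.filter (fun w => w ∉ S) := by
    simp only [hW, mem_filter, mem_univ, true_and, not_and]
    intro h; omega
  have hpt : ∀ u ∈ S, ∑ w ∈ W.filter (fun w => w ∉ S), (A u w : ℤ)
      ≤ ∑ w ∈ univ.filter (fun w => w ∉ S), (A u w : ℤ) := by
    intro u _
    apply Finset.sum_le_sum_of_subset_of_nonneg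
    · intro w hw; simp only [mem_filter] at hw ⊢; exact ⟨mem_univ w, hw.2⟩
    · intro w _ _; positivity
  have hstrict : ∑ w ∈ W.filter (fun w => w ∉ S), (A u₁ w : ℤ)
      < ∑ w ∈ univ.filter (fun w => w ∉ S), (A u₁ w : ℤ) := by
    have hins : insert w₀ (W.filter (fun w => w ∉ S)) ⊆ univ.filter (fun w => w ∉ S) := by
      intro w hw
      rcases Finset.mem_insert.mp hw with rfl | hw'
      · simp [hw₀S]
      · simp only [mem_filter] at hw' ⊢; exact ⟨mem_univ w, hw'.2⟩
    have h1 : ∑ w ∈ insert w₀ (W.filter (fun w => w ∉ S)), (A u₁ w : ℤ)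
        ≤ ∑ w ∈ univ.filter (fun w => w ∉ S), (A u₁ w : ℤ) := by
      apply Finset.sum_le_sum_of_subset_of_nonneg hins
      intro w _ _; positivity
    rw [Finset.sum_insert hw₀W] at h1
    have h2 : 1 ≤ (A u₁ w₀ : ℤ) := by exact_mod_cast hw₀A
    linarith
  have := Finset.sum_lt_sum hpt ⟨u₁, hu₁, hstrict⟩
  omega

lemma mu_decrease (hsymm : ∀ v w, A v w = A w v) (hconn : (GG A).Connected)
    {q : V} (T : ℕ) {D : V → ℤ} {S : Finset V}
    (hSne : S.Nonempty) (hqS : q ∉ S)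
    (hinv : ∀ v, v ≠ q → 0 ≤ D v) (hT : ∑ v ∈ univ.erase q, D v ≤ (T : ℤ))
    (hstab : ∀ v ∈ S, ∑ w ∈ univ.filter (fun w => w ∉ S), (A v w : ℤ) ≤ D v) :
    mu A q T (fun v => D v - lapApply A (fireSet S) v) ≤ mu A q T D - 1 := by
  set D' : V → ℤ := fun v => D v - lapApply A (fireSet S) v with hD'
  have hinv' : ∀ v, v ≠ q → 0 ≤ D' v := by
    intro v hv
    rw [hD']
    by_cases hvS : v ∈ S
    · simp only
      rw [lap_fire, if_pos hvS]
      have := hstab v hvS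
      linarith
    · simp only
      rw [lap_fire, if_neg hvS]
      have h1 : (0:ℤ) ≤ ∑ w ∈ S, (A v w : ℤ) := by positivity
      have := hinv v hv
      linarith
  have hT' : ∑ v ∈ univ.erase q, D' v ≤ (T : ℤ) := by
    have h0 : ∑ v ∈ univ.erase q, lapApply A (fireSet S) v
        = - lapApply A (fireSet S) q := by
      have := Finset.sum_erase_eq_sub (f := lapApply A (fireSet S)) (mem_univ q)
      rw [this, sum_lap hsymm]
      ring
    have h1 : ∑ v ∈ univ.erase q, D' v
        = (∑ v ∈ univ.erase q, D v) - ∑ v ∈ univ.erase q, lapApply A (fireSet S) v := by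
      rw [hD', Finset.sum_sub_distrib]
    have h2 : (0:ℤ) ≤ ∑ w ∈ S, (A q w : ℤ) := by positivity
    rw [h1, h0, lap_fire, if_neg hqS]
    linarith
  obtain ⟨u₁, hu₁S, hmin⟩ := Finset.exists_min_image S (dd A q) hSne
  set n := Fintype.card V with hn
  set k₀ := dd A q u₁ with hk₀
  have hu₁q : u₁ ≠ q := fun h => hqS (h ▸ hu₁S)
  have hk₀1 : 1 ≤ k₀ := dd_pos hconn hu₁q
  have hk₀n : k₀ < n := dd_lt hconn q u₁
  set x : ℤ := (T : ℤ) + 1 with hx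
  have hx0 : (0:ℤ) ≤ x := by positivity
  have hsplit : ∀ E : V → ℤ,
      mu A q T E = (∑ j ∈ Finset.Ioc 0 k₀, Phi A q j E * x ^ (n - j))
        + ∑ j ∈ Finset.Ioc k₀ n, Phi A q j E * x ^ (n - j) := by
    intro E
    rw [mu, Finset.sum_Ioc_consecutive _ (Nat.zero_le k₀) (le_of_lt hk₀n)]
  have hbound1 : ∑ j ∈ Finset.Ioc 0 k₀, Phi A q j D' * x ^ (n - j)
      ≤ (∑ j ∈ Finset.Ioc 0 k₀, Phi A q j D * x ^ (n - j)) - x ^ (n - k₀) := by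
    have hstep : ∀ j ∈ Finset.Ioc 0 k₀, Phi A q j D' * x ^ (n - j)
        ≤ Phi A q j D * x ^ (n - j) + (if j = k₀ then - x ^ (n - k₀) else 0) := by
      intro j hj
      simp only [Finset.mem_Ioc] at hj
      by_cases hjk : j = k₀
      · rw [hjk, if_pos rfl]
        have hphl := Phi_fire_lt hsymm hconn hqS D hu₁S hmin
        rw [← hk₀, ← hD'] at hphl
        have h1 : Phi A q k₀ D' * x ^ (n - k₀) ≤ (Phi A q k₀ D - 1) * x ^ (n - k₀) :=
          mul_le_mul_of_nonneg_right hphl (by positivity)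
        have h2 : (Phi A q k₀ D - 1) * x ^ (n - k₀)
            = Phi A q k₀ D * x ^ (n - k₀) - x ^ (n - k₀) := by ring
        linarith
      · rw [if_neg hjk]
        have hSj : ∀ u ∈ S, j ≤ dd A q u := fun u hu => le_trans hj.2 (hmin u hu)
        have hple := Phi_fire_le hsymm D hSj
        rw [← hD'] at hple
        have h1 : Phi A q j D' * x ^ (n - j) ≤ Phi A q j D * x ^ (n - j) :=
          mul_le_mul_of_nonneg_right hple (by positivity)
        linarith
    have := Finset.sum_le_sum hstep
    rw [Finset.sum_add_distrib, Finset.sum_ite_eq' (Finset.Ioc 0 k₀) k₀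
      (fun _ => - x ^ (n - k₀))] at this
    rw [if_pos (by simp [Finset.mem_Ioc]; omega)] at this
    linarith
  have hbound2 : ∑ j ∈ Finset.Ioc k₀ n, Phi A q j D' * x ^ (n - j)
      ≤ (∑ j ∈ Finset.Ioc k₀ n, Phi A q j D * x ^ (n - j)) + (x ^ (n - k₀) - 1) := by
    have hup : ∑ j ∈ Finset.Ioc k₀ n, Phi A q j D' * x ^ (n - j)
        ≤ ∑ j ∈ Finset.Ioc k₀ n, (T : ℤ) * x ^ (n - j) := by
      apply Finset.sum_le_sum
      intro j hj
      simp only [Finset.mem_Ioc] at hj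
      have h1 : Phi A q j D' ≤ (T : ℤ) := Phi_le hinv' hT' (by omega)
      exact mul_le_mul_of_nonneg_right h1 (by positivity)
    have hlow : 0 ≤ ∑ j ∈ Finset.Ioc k₀ n, Phi A q j D * x ^ (n - j) := by
      apply Finset.sum_nonneg
      intro j hj
      simp only [Finset.mem_Ioc] at hj
      exact mul_nonneg (Phi_nonneg hinv (by omega)) (by positivity)
    have hgeom : ∑ j ∈ Finset.Ioc k₀ n, (T : ℤ) * x ^ (n - j) = x ^ (n - k₀) - 1 := by
      have hre : ∑ j ∈ Finset.Ioc k₀ n, x ^ (n - j)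
          = ∑ i ∈ Finset.range (n - k₀), x ^ i := by
        refine Finset.sum_nbij' (fun j => n - j) (fun i => n - i) ?_ ?_ ?_ ?_ ?_
        · intro a ha; simp only [Finset.mem_Ioc] at ha; simp only [Finset.mem_range]; omega
        · intro a ha; simp only [Finset.mem_range] at ha; simp only [Finset.mem_Ioc]; omega
        · intro a ha; simp only [Finset.mem_Ioc] at ha; show n - (n - a) = a; omega
        · intro a ha; simp only [Finset.mem_range] at ha; show n - (n - a) = a; omega
        · intro a ha; rfl
      rw [← Finset.mul_sum, hre]
      have := geom_sum_mul x (n - k₀)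
      have hx1 : x - 1 = (T : ℤ) := by rw [hx]; ring
      rw [hx1] at this
      linarith [this]
    rw [hgeom] at hup
    linarith
  rw [hsplit D', hsplit D]
  linarith


lemma no_stable (q : V) (D : V → ℤ) (hinv : ∀ v, v ≠ q → 0 ≤ D v)
    (hst : ¬ ∃ S : Finset V, S.Nonempty ∧ q ∉ S ∧
      ∀ v ∈ S, ∑ w ∈ univ.filter (fun w => w ∉ S), (A v w : ℤ) ≤ D v) :
    Winnable A D ∨ ∃ ord : V → ℕ, Function.Injective ord ∧
      Winnable A (fun v => nuD A ord v - D v) := by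
  push_neg at hst
  obtain ⟨ord, hinj, hzero, hmain⟩ := exists_burning_order q D hst
  by_cases hDq : 0 ≤ D q
  · left
    apply winnable_of_nonneg
    intro v
    by_cases hv : v = q
    · rw [hv]; exact hDq
    · exact hinv v hv
  · right
    refine ⟨ord, hinj, winnable_of_nonneg ?_⟩
    intro v
    by_cases hv : v = q
    · subst hv
      have hempty : univ.filter (fun w => ord w < ord v) = ∅ := by
        apply Finset.filter_false_of_mem
        intro w _
        have : ord v = 0 := (hzero v).mpr rfl
        omega
      simp only [nuD, hempty, Finset.sum_empty]
      omega
    · have := hmain v hv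
      simp only [nuD]
      omega

lemma lemA (hsymm : ∀ v w, A v w = A w v) (hconn : (GG A).Connected)
    (q : V) (T : ℕ) :
    ∀ (k : ℕ) (D : V → ℤ), (∀ v, v ≠ q → 0 ≤ D v) →
      (∑ v ∈ univ.erase q, D v ≤ (T : ℤ)) → mu A q T D ≤ (k : ℤ) →
      Winnable A D ∨ ∃ ord : V → ℕ, Function.Injective ord ∧
        Winnable A (fun v => nuD A ord v - D v) := by
  intro k
  induction k with
  | zero =>
    intro D hinv hT hmu
    by_cases hst : ∃ S : Finset V, S.Nonempty ∧ q ∉ S ∧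
        ∀ v ∈ S, ∑ w ∈ univ.filter (fun w => w ∉ S), (A v w : ℤ) ≤ D v
    · exfalso
      obtain ⟨S, hSne, hqS, hstab⟩ := hst
      have hdec := mu_decrease hsymm hconn T hSne hqS hinv hT hstab
      have hinv' : ∀ v, v ≠ q → 0 ≤ D v - lapApply A (fireSet S) v := by
        intro v hv
        by_cases hvS : v ∈ S
        · rw [lap_fire, if_pos hvS]
          have := hstab v hvS
          linarith
        · rw [lap_fire, if_neg hvS]
          have h1 : (0:ℤ) ≤ ∑ w ∈ S, (A v w : ℤ) := by positivity
          have := hinv v hv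
          linarith
      have := mu_nonneg (A := A) (q := q) (D := fun v => D v - lapApply A (fireSet S) v)
        hinv' T
      omega
    · exact no_stable q D hinv hst
  | succ k ih =>
    intro D hinv hT hmu
    by_cases hst : ∃ S : Finset V, S.Nonempty ∧ q ∉ S ∧
        ∀ v ∈ S, ∑ w ∈ univ.filter (fun w => w ∉ S), (A v w : ℤ) ≤ D v
    · obtain ⟨S, hSne, hqS, hstab⟩ := hst
      set D' : V → ℤ := fun v => D v - lapApply A (fireSet S) v with hD'
      have hdec := mu_decrease hsymm hconn T hSne hqS hinv hT hstab
      rw [← hD'] at hdec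
      have hinv' : ∀ v, v ≠ q → 0 ≤ D' v := by
        intro v hv
        rw [hD']
        by_cases hvS : v ∈ S
        · simp only
          rw [lap_fire, if_pos hvS]
          have := hstab v hvS
          linarith
        · simp only
          rw [lap_fire, if_neg hvS]
          have h1 : (0:ℤ) ≤ ∑ w ∈ S, (A v w : ℤ) := by positivity
          have := hinv v hv
          linarith
      have hT' : ∑ v ∈ univ.erase q, D' v ≤ (T : ℤ) := by
        have h0 : ∑ v ∈ univ.erase q, lapApply A (fireSet S) v
            = - lapApply A (fireSet S) q := by
          have := Finset.sum_erase_eq_sub (f := lapApply A (fireSet S)) (mem_univ q)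
          rw [this, sum_lap hsymm]
          ring
        have h1 : ∑ v ∈ univ.erase q, D' v
            = (∑ v ∈ univ.erase q, D v) - ∑ v ∈ univ.erase q, lapApply A (fireSet S) v := by
          rw [hD', Finset.sum_sub_distrib]
        have h2 : (0:ℤ) ≤ ∑ w ∈ S, (A q w : ℤ) := by positivity
        rw [h1, h0, lap_fire, if_neg hqS]
        linarith
      have hmu' : mu A q T D' ≤ (k : ℤ) := by
        push_cast at hmu ⊢
        omega
      rcases ih D' hinv' hT' hmu' with h | ⟨ord, hinj, hw⟩
      · left
        obtain ⟨f, hf⟩ := h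
        refine ⟨fun v => fireSet S v + f v, fun v => ?_⟩
        have hla : lapApply A (fun v => fireSet S v + f v) v
            = lapApply A (fireSet S) v + lapApply A f v := by
          simp only [lapApply, mul_add, Finset.sum_add_distrib]
          ring
        have := hf v
        rw [hD'] at this
        simp only at this
        rw [hla]
        linarith
      · right
        refine ⟨ord, hinj, ?_⟩
        obtain ⟨f, hf⟩ := hw
        refine ⟨fun v => f v - fireSet S v, fun v => ?_⟩
        have hla : lapApply A (fun v => f v - fireSet S v) v
            = lapApply A f v - lapApply A (fireSet S) v := by
          simp only [lapApply, mul_sub, Finset.sum_sub_distrib]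
          ring
        have := hf v
        rw [hD'] at this
        simp only at this
        rw [hla]
        dsimp only
        linarith
    · exact no_stable q D hinv hst


/-! ### the dichotomy -/

lemma dichotomy (hsymm : ∀ v w, A v w = A w v) (hconn : (GG A).Connected)
    {D : V → ℤ} (hD : ¬ Winnable A D) :
    ∃ ord : V → ℕ, Function.Injective ord ∧ Winnable A (fun v => nuD A ord v - D v) := by
  have hne : Nonempty V := hconn.nonempty
  obtain ⟨q⟩ := hne
  obtain ⟨f₀, hf₀⟩ := exists_eff_off_q hsymm hconn q D
  set D' : V → ℤ := fun v => D v - lapApply A f₀ v with hD'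
  have hinv : ∀ v, v ≠ q → 0 ≤ D' v := fun v hv => hf₀ v hv
  have hsum0 : 0 ≤ ∑ v ∈ univ.erase q, D' v :=
    Finset.sum_nonneg fun v hv => hinv v (Finset.ne_of_mem_erase hv)
  set T : ℕ := (∑ v ∈ univ.erase q, D' v).toNat with hTdef
  have hT : ∑ v ∈ univ.erase q, D' v ≤ (T : ℤ) := Int.self_le_toNat _
  set k : ℕ := (mu A q T D').toNat with hkdef
  have hk : mu A q T D' ≤ (k : ℤ) := Int.self_le_toNat _
  rcases lemA hsymm hconn q T k D' hinv hT hk with h | ⟨ord, hinj, hw⟩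
  · exfalso
    rw [hD'] at h
    exact hD ((winnable_shift f₀).mp h)
  · refine ⟨ord, hinj, ?_⟩
    obtain ⟨f, hf⟩ := hw
    refine ⟨fun v => f v - f₀ v, fun v => ?_⟩
    have hla := lap_sub (A := A) f f₀ v
    have := hf v
    rw [hD'] at this
    simp only at this
    rw [hla]
    dsimp only
    linarith

/-! ### positive degree -/

lemma degp_nonneg (X : V → ℤ) : 0 ≤ degp X :=
  Finset.sum_nonneg fun v _ => le_max_right _ _

lemma degp_neg (X : V → ℤ) : degp (fun v => - X v) = degp X - ∑ v, X v := by
  have h : ∀ x : ℤ, max (-x) 0 = max x 0 - x := by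
    intro x
    rcases le_total x 0 with h | h
    · rw [max_eq_left (neg_nonneg.mpr h), max_eq_right h]
      ring
    · rw [max_eq_right (neg_nonpos.mpr h), max_eq_left h]
      ring
  simp only [degp, h, Finset.sum_sub_distrib]

lemma degp_le_of_le {X E : V → ℤ} (hXE : ∀ v, X v ≤ E v) (hE : ∀ v, 0 ≤ E v) :
    degp X ≤ ∑ v, E v :=
  Finset.sum_le_sum fun v _ => max_le (hXE v) (hE v)

/-! ### the set of test values -/

def TT (A : V → V → ℕ) (D : V → ℤ) : Set ℤ :=
  {t | ∃ ord : V → ℕ, Function.Injective ord ∧ ∃ f : V → ℤ,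
    t = degp (fun v => D v - lapApply A f v - nuD A ord v)}

lemma TT_nonempty (D : V → ℤ) : (TT A D).Nonempty := by
  refine ⟨_, fun v => ((Fintype.equivFin V) v : ℕ), ?_, fun _ => 0, rfl⟩
  intro a b hab
  exact (Fintype.equivFin V).injective (Fin.val_injective hab)

lemma TT_least (D : V → ℤ) : ∃ t₀ ∈ TT A D, ∀ t ∈ TT A D, t₀ ≤ t := by
  obtain ⟨t, ht⟩ := TT_nonempty (A := A) D
  obtain ⟨lb, hlb1, hlb2⟩ := Int.exists_least_of_bdd (P := fun z => z ∈ TT A D)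
    ⟨0, fun z hz => by
      obtain ⟨ord, hinj, f, hval⟩ := hz
      rw [hval]; exact degp_nonneg _⟩ ⟨t, ht⟩
  exact ⟨lb, hlb1, hlb2⟩

/-! ### the rank identity -/

lemma SS_eq (hsymm : ∀ v w, A v w = A w v) (hconn : (GG A).Connected)
    (D : V → ℤ) {t₀ : ℤ} (ht₀ : t₀ ∈ TT A D) (ht₀min : ∀ t ∈ TT A D, t₀ ≤ t) :
    {r : ℤ | ∀ E : V → ℤ, (∀ v, 0 ≤ E v) → (∑ v, E v) = r →
      Winnable A (fun v => D v - E v)} = Set.Iic (t₀ - 1) := by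
  have hne : Nonempty V := hconn.nonempty
  ext r
  simp only [Set.mem_setOf_eq, Set.mem_Iic]
  constructor
  · intro hr
    by_contra hcon
    push_neg at hcon
    have hrt : t₀ ≤ r := by omega
    obtain ⟨ord, hinj, f, hval⟩ := ht₀
    set X : V → ℤ := fun v => D v - lapApply A f v - nuD A ord v with hX
    set v₀ : V := Classical.arbitrary V with hv₀
    set E : V → ℤ := fun v => max (X v) 0 + (if v = v₀ then r - t₀ else 0) with hE
    have hEnn : ∀ v, 0 ≤ E v := by
      intro v
      rw [hE]
      have h1 : (0:ℤ) ≤ max (X v) 0 := le_max_right _ _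
      by_cases h : v = v₀ <;> simp only [h, if_true, if_false] <;> omega
    have hEdeg : ∑ v, E v = r := by
      rw [hE]
      rw [Finset.sum_add_distrib]
      have h1 : ∑ v, (if v = v₀ then r - t₀ else 0) = r - t₀ :=
        Finset.sum_ite_eq' univ v₀ (fun _ => r - t₀) |>.trans (if_pos (mem_univ v₀))
      have h2 : ∑ v, max (X v) 0 = t₀ := by rw [hval]; rfl
      omega
    have hw1 : Winnable A (fun v => D v - E v) := hr E hEnn hEdeg
    have hw2 : Winnable A (fun v => nuD A ord v - (D v - E v)) := by
      refine ⟨fun v => - f v, fun v => ?_⟩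
      rw [lap_neg]
      have h1 : X v ≤ max (X v) 0 := le_max_left _ _
      have h2 : max (X v) 0 ≤ E v := by
        rw [hE]
        by_cases h : v = v₀ <;> simp only [h, if_true, if_false] <;> omega
      have h3 : X v = D v - lapApply A f v - nuD A ord v := rfl
      dsimp only
      omega
    have hwnu : Winnable A (nuD A ord) := by
      have := winnable_add hw1 hw2
      have heq : (fun v => (D v - E v) + (nuD A ord v - (D v - E v))) = nuD A ord := by
        funext v; ring
      rwa [heq] at this
    exact nu_not_winnable hsymm hinj hwnu
  · intro hr E hEnn hEdeg
    by_contra hnw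
    obtain ⟨ord, hinj, hw⟩ := dichotomy hsymm hconn hnw
    obtain ⟨f, hf⟩ := hw
    have hmem : degp (fun v => D v - lapApply A (fun w => - f w) v - nuD A ord v) ∈ TT A D :=
      ⟨ord, hinj, fun w => - f w, rfl⟩
    have hle : degp (fun v => D v - lapApply A (fun w => - f w) v - nuD A ord v) ≤ r := by
      rw [← hEdeg]
      apply degp_le_of_le _ hEnn
      intro v
      have := hf v
      rw [lap_neg]
      dsimp only at this ⊢
      omega
    have := ht₀min _ hmem
    omega

lemma divisorRank_eq (hsymm : ∀ v w, A v w = A w v) (hconn : (GG A).Connected)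
    (D : V → ℤ) {t₀ : ℤ} (ht₀ : t₀ ∈ TT A D) (ht₀min : ∀ t ∈ TT A D, t₀ ≤ t) :
    divisorRank A D = t₀ - 1 := by
  rw [divisorRank, SS_eq hsymm hconn D ht₀ ht₀min, csSup_Iic]

/-! ### the duality -/

lemma TT_corr (hsymm : ∀ v w, A v w = A w v) (hdiag : ∀ v, A v v = 0)
    {g : ℤ} (hg : 2 * g = (∑ v, ∑ w, (A v w : ℤ)) - 2 * (Fintype.card V : ℤ) + 2)
    (D : V → ℤ) {t : ℤ} (ht : t ∈ TT A D) :
    t - (∑ v, D v) + (g - 1) ∈ TT A (fun v => ((∑ w, (A v w : ℤ)) - 2) - D v) := by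
  obtain ⟨ord, hinj, f, hval⟩ := ht
  refine ⟨revOrd ord, revOrd_inj hinj, fun v => - f v, ?_⟩
  have hXY : (fun v => (fun v => ((∑ w, (A v w : ℤ)) - 2) - D v) v
        - lapApply A (fun v => - f v) v - nuD A (revOrd ord) v)
      = fun v => - (D v - lapApply A f v - nuD A ord v) := by
    funext v
    have h1 := K_sub_nu hsymm hdiag (revOrd_inj hinj) (A := A) v
    have h2 := congrFun (nu_revrev (A := A) hinj) v
    rw [h2] at h1
    rw [lap_neg]
    dsimp only
    linarith
  rw [hXY, degp_neg]
  have hsl : ∑ v, (D v - lapApply A f v - nuD A ord v)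
      = (∑ v, D v) - (g - 1) := by
    rw [Finset.sum_sub_distrib, Finset.sum_sub_distrib, sum_lap hsymm,
      deg_nu hsymm hdiag hinj hg]
    ring
  rw [hval]
  rw [hsl]
  ring

end BN

/-- **Riemann–Roch for graphs (Baker–Norine).**
Let `G` be a finite connected loopless multigraph with adjacency matrix `A`, genus
`g = |E| - |V| + 1` (encoded via `2 * g = ∑ v w, A v w - 2 * |V| + 2`) and canonical
divisor `K v = deg v - 2`.  Then for every divisor `D`,
`r(D) - r(K - D) = deg D + 1 - g`. -/
theorem riemann_roch_for_graphs {V : Type*} [Fintype V] (A : V → V → ℕ)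
    (hsymm : ∀ v w, A v w = A w v) (hdiag : ∀ v, A v v = 0)
    (hconn : (SimpleGraph.fromRel fun v w => 0 < A v w).Connected)
    (g : ℤ) (hg : 2 * g = (∑ v, ∑ w, (A v w : ℤ)) - 2 * (Fintype.card V : ℤ) + 2)
    (D : V → ℤ) :
    divisorRank A D - divisorRank A (fun v => ((∑ w, (A v w : ℤ)) - 2) - D v)
      = (∑ v, D v) + 1 - g := by
  
  
  classical
  have hconn' : (BN.GG A).Connected := hconn
  set K : V → ℤ := fun v => (∑ w, (A v w : ℤ)) - 2 with hK
  obtain ⟨t₁, ht₁, ht₁min⟩ := BN.TT_least (A := A) D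
  obtain ⟨t₂, ht₂, ht₂min⟩ := BN.TT_least (A := A) (fun v => K v - D v)
  have hr1 : divisorRank A D = t₁ - 1 := BN.divisorRank_eq hsymm hconn' D ht₁ ht₁min
  have hr2 : divisorRank A (fun v => K v - D v) = t₂ - 1 :=
    BN.divisorRank_eq hsymm hconn' _ ht₂ ht₂min
  -- t₂ ≤ t₁ - deg D + g - 1
  have hcorr1 := BN.TT_corr hsymm hdiag hg D ht₁
  have hle1 : t₂ ≤ t₁ - (∑ v, D v) + (g - 1) := ht₂min _ hcorr1
  -- and conversely
  have hcorr2 := BN.TT_corr hsymm hdiag hg (fun v => K v - D v) ht₂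
  have hDD : (fun v => ((∑ w, (A v w : ℤ)) - 2) - (fun v => K v - D v) v) = D := by
    funext v
    rw [hK]
    dsimp only
    ring
  rw [hDD] at hcorr2
  have hle2 : t₁ ≤ t₂ - (∑ v, (K v - D v)) + (g - 1) := ht₁min _ hcorr2
  have hsumK : ∑ v, K v = 2 * g - 2 := by
    rw [hK]
    rw [Finset.sum_sub_distrib]
    have h1 : ∑ v, (∑ w, (A v w : ℤ)) = ∑ v, ∑ w, (A v w : ℤ) := rfl
    have h2 : ∑ v : V, (2:ℤ) = 2 * (Fintype.card V : ℤ) := by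
      rw [Finset.sum_const, Finset.card_univ]
      ring
    omega
  have hsumKD : ∑ v, (K v - D v) = (2 * g - 2) - ∑ v, D v := by
    rw [Finset.sum_sub_distrib, hsumK]
  rw [hsumKD] at hle2
  have ht : t₂ = t₁ - (∑ v, D v) + (g - 1) := by omega
  rw [hr1, hr2, ht]
  ring
end

section
/- Let G be a finite connected loopless multigraph with genus g = |E| − |V| + 1. Every divisor D on G with deg D ≥ g is linearly equivalent to an effective divisor; that is, there exists f : V → ℤ such that D − L f is nonnegative at every vertex, where L is the Laplacian of G. -/
open Finset

section BakerNorineAux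

open Finset

variable {V : Type*} [Fintype V] [DecidableEq V]

private lemma lap_eq (A : V → V → ℕ) (f : V → ℤ) (v : V) :
    lapApply A f v = ∑ w, (A v w : ℤ) * (f v - f w) := by
  simp [lapApply, mul_sub, Finset.sum_sub_distrib, Finset.sum_mul]

private lemma lap_add (A : V → V → ℕ) (f g : V → ℤ) (v : V) :
    lapApply A (fun u => f u + g u) v = lapApply A f v + lapApply A g v := by
  simp [lapApply, mul_add, Finset.sum_add_distrib]; ring

private lemma lap_shift (A : V → V → ℕ) (f : V → ℤ) (c : ℤ) (v : V) :
    lapApply A (fun u => f u + c) v = lapApply A f v := by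
  simp [lap_eq]

private lemma lap_sum_subset (A : V → V → ℕ) (hsymm : ∀ v w, A v w = A w v) (f : V → ℤ)
    (S : Finset V) :
    ∑ v ∈ S, lapApply A f v = ∑ v ∈ S, ∑ w ∈ Sᶜ, (A v w : ℤ) * (f v - f w) := by
  have h1 : ∀ v, lapApply A f v
      = (∑ w ∈ S, (A v w : ℤ) * (f v - f w)) + ∑ w ∈ Sᶜ, (A v w : ℤ) * (f v - f w) := by
    intro v
    rw [lap_eq, Finset.sum_add_sum_compl]
  have h2 : ∑ v ∈ S, ∑ w ∈ S, (A v w : ℤ) * (f v - f w) = 0 := by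
    have hswap : ∑ v ∈ S, ∑ w ∈ S, (A v w : ℤ) * (f v - f w)
        = ∑ v ∈ S, ∑ w ∈ S, -((A w v : ℤ) * (f w - f v)) := by
      refine Finset.sum_congr rfl fun v _ => Finset.sum_congr rfl fun w _ => ?_
      rw [hsymm]; ring
    have hcomm : ∑ v ∈ S, ∑ w ∈ S, ((A w v : ℤ) * (f w - f v))
        = ∑ v ∈ S, ∑ w ∈ S, ((A v w : ℤ) * (f v - f w)) := Finset.sum_comm
    simp only [Finset.sum_neg_distrib] at hswap
    rw [hcomm] at hswap
    linarith
  simp only [h1, Finset.sum_add_distrib, h2, zero_add]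

private lemma lap_sum_univ (A : V → V → ℕ) (hsymm : ∀ v w, A v w = A w v) (f : V → ℤ) :
    ∑ v, lapApply A f v = 0 := by
  rw [lap_sum_subset A hsymm f univ]
  simp

omit [Fintype V] [DecidableEq V] in
private lemma walk_cross {G : SimpleGraph V} {S : Finset V} :
    ∀ {a b : V}, G.Walk a b → a ∈ S → b ∉ S → ∃ x ∈ S, ∃ y, y ∉ S ∧ G.Adj x y := by
  intro a b w
  induction w with
  | nil => intro h1 h2; exact absurd h1 h2
  | @cons u c b h p ih =>
    intro hu hb
    by_cases hc : c ∈ S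
    · exact ih hc hb
    · exact ⟨u, hu, c, hc, h⟩

private lemma cross (A : V → V → ℕ) (hsymm : ∀ v w, A v w = A w v)
    (hconn : (SimpleGraph.fromRel fun v w => 0 < A v w).Connected)
    {S : Finset V} (h1 : S.Nonempty) (h2 : Sᶜ.Nonempty) :
    ∃ a ∈ S, ∃ b, b ∉ S ∧ 0 < A a b := by
  obtain ⟨a, ha⟩ := h1
  obtain ⟨b, hb⟩ := h2
  rw [Finset.mem_compl] at hb
  obtain ⟨w⟩ := hconn.preconnected a b
  obtain ⟨x, hx, y, hy, hadj⟩ := walk_cross w ha hb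
  rw [SimpleGraph.fromRel_adj] at hadj
  obtain ⟨-, h | h⟩ := hadj
  · exact ⟨x, hx, y, hy, h⟩
  · exact ⟨x, hx, y, hy, by rw [hsymm]; exact h⟩

private lemma E2_erase (A : V → V → ℕ) (hsymm : ∀ v w, A v w = A w v) (hdiag : ∀ v, A v v = 0)
    {S : Finset V} {v : V} (hv : v ∈ S) :
    (∑ a ∈ S, ∑ w, (A a w : ℤ)) + ∑ a ∈ S, ∑ w ∈ Sᶜ, (A a w : ℤ)
      = ((∑ a ∈ S.erase v, ∑ w, (A a w : ℤ))
          + ∑ a ∈ S.erase v, ∑ w ∈ (S.erase v)ᶜ, (A a w : ℤ))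
        + 2 * ∑ w ∈ Sᶜ, (A v w : ℤ) := by
  set S' := S.erase v with hS'
  have hvc : v ∉ Sᶜ := by simp [hv]
  have hcompl : ∀ a : V, ∑ w ∈ S'ᶜ, (A a w : ℤ) = (A a v : ℤ) + ∑ w ∈ Sᶜ, (A a w : ℤ) := by
    intro a
    rw [hS', Finset.compl_erase, Finset.sum_insert hvc]
  have ha : ∑ a ∈ S', (∑ w, (A a w : ℤ)) + (∑ w, (A v w : ℤ)) = ∑ a ∈ S, ∑ w, (A a w : ℤ) :=
    Finset.sum_erase_add S _ hv
  have hb : ∑ a ∈ S', (∑ w ∈ Sᶜ, (A a w : ℤ)) + (∑ w ∈ Sᶜ, (A v w : ℤ))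
      = ∑ a ∈ S, ∑ w ∈ Sᶜ, (A a w : ℤ) :=
    Finset.sum_erase_add S _ hv
  have hc : ∑ a ∈ S', ∑ w ∈ Sᶜ, (A a w : ℤ)
      = (∑ a ∈ S', ∑ w ∈ S'ᶜ, (A a w : ℤ)) - ∑ a ∈ S', (A a v : ℤ) := by
    rw [eq_sub_iff_add_eq, ← Finset.sum_add_distrib]
    exact Finset.sum_congr rfl fun a _ => by rw [hcompl a]; ring
  have hd : (∑ w, (A v w : ℤ)) = (∑ w ∈ S', (A v w : ℤ)) + ∑ w ∈ Sᶜ, (A v w : ℤ) := by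
    rw [← Finset.sum_add_sum_compl S' (fun w => (A v w : ℤ))]
    congr 1
    rw [hcompl v, hdiag v]
    simp
  have he : ∑ w ∈ S', (A v w : ℤ) = ∑ a ∈ S', (A a v : ℤ) :=
    Finset.sum_congr rfl fun a _ => by rw [hsymm]
  linarith

private lemma counting (A : V → V → ℕ) (hsymm : ∀ v w, A v w = A w v) (hdiag : ∀ v, A v v = 0)
    (D' : V → ℤ) (q : V)
    (hred : ∀ S : Finset V, S ⊆ univ.erase q → S.Nonempty →
      ∃ v ∈ S, D' v + 1 ≤ ∑ w ∈ Sᶜ, (A v w : ℤ)) :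
    ∀ S : Finset V, S ⊆ univ.erase q →
      2 * ∑ v ∈ S, D' v
        ≤ ((∑ v ∈ S, ∑ w, (A v w : ℤ)) + ∑ v ∈ S, ∑ w ∈ Sᶜ, (A v w : ℤ))
          - 2 * (S.card : ℤ) := by
  intro S
  induction S using Finset.strongInduction with
  | _ S ih =>
    intro hSq
    rcases S.eq_empty_or_nonempty with rfl | hSne
    · simp
    obtain ⟨v, hvS, hv⟩ := hred S hSq hSne
    have IH := ih _ (Finset.erase_ssubset hvS)
      (subset_trans (Finset.erase_subset v S) hSq)
    have hkey := E2_erase A hsymm hdiag hvS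
    have hsum : ∑ u ∈ S.erase v, D' u + D' v = ∑ u ∈ S, D' u :=
      Finset.sum_erase_add S _ hvS
    have h1 : 1 ≤ S.card := Finset.card_pos.mpr hSne
    have hcard : (S.card : ℤ) = ((S.erase v).card : ℤ) + 1 := by
      rw [Finset.card_erase_of_mem hvS]
      push_cast [Nat.cast_sub h1]
      ring
    linarith

private lemma exists_effective_off (A : V → V → ℕ) (hsymm : ∀ v w, A v w = A w v)
    (hdiag : ∀ v, A v v = 0)
    (hconn : (SimpleGraph.fromRel fun v w => 0 < A v w).Connected)
    (D : V → ℤ) (q : V) :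
    ∃ f : V → ℤ, f q = 0 ∧ ∀ v, v ≠ q → lapApply A f v ≤ D v := by
  set n := Fintype.card V with hn
  set C : ℤ := ∑ v, |D v| with hCdef
  set Δ : ℤ := ∑ v, ∑ w, (A v w : ℤ) with hΔdef
  set B : ℤ := Δ + C + 1 with hBdef
  have hC : 0 ≤ C := Finset.sum_nonneg fun v _ => abs_nonneg _
  have hdegnn : ∀ v : V, 0 ≤ ∑ w, (A v w : ℤ) :=
    fun v => Finset.sum_nonneg fun w _ => Int.natCast_nonneg _
  have hdegΔ : ∀ v : V, (∑ w, (A v w : ℤ)) ≤ Δ := by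
    intro v
    exact Finset.single_le_sum (fun u _ => hdegnn u) (Finset.mem_univ v)
  have hΔ : 0 ≤ Δ := le_trans (hdegnn q) (hdegΔ q)
  have hB : 1 ≤ B := by omega
  have hDlow : ∀ v, -C ≤ D v := by
    intro v
    have h1 : |D v| ≤ C :=
      Finset.single_le_sum (f := fun v => |D v|) (fun u _ => abs_nonneg _) (Finset.mem_univ v)
    have := neg_abs_le (D v)
    omega
  -- main induction
  have main : ∀ k : ℕ, ∃ S : Finset V, q ∈ S ∧ (S = univ ∨ k ≤ S.card) ∧
      ∃ f : V → ℤ, (∀ v, v ∉ S → f v = 0) ∧ (∀ v ∈ S, B ^ (n - S.card) ≤ f v) ∧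
        (∀ v ∈ S, v ≠ q → lapApply A f v ≤ D v) := by
    intro k
    induction k with
    | zero =>
      refine ⟨{q}, Finset.mem_singleton_self q, Or.inr (Nat.zero_le _),
        fun v => if v = q then B ^ (n - 1) else 0, ?_, ?_, ?_⟩
      · intro v hv
        simp only [Finset.mem_singleton] at hv
        simp [hv]
      · intro v hv
        simp only [Finset.mem_singleton] at hv
        simp [hv, Finset.card_singleton]
      · intro v hv hvq
        simp only [Finset.mem_singleton] at hv
        exact absurd hv hvq
    | succ k ih =>
      obtain ⟨S, hqS, hcard, f, hout, hlow, hcon⟩ := ih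
      by_cases hSuniv : S = univ
      · exact ⟨S, hqS, Or.inl hSuniv, f, hout, hlow, hcon⟩
      have hScard : S.card < n := by
        have : S ⊂ univ := Finset.ssubset_univ_iff.mpr hSuniv
        simpa [hn, Finset.card_univ] using Finset.card_lt_card this
      have hcompl : Sᶜ.Nonempty := by
        rw [← Finset.card_pos, Finset.card_compl]
        omega
      obtain ⟨a, haS, b, hbS, hab⟩ := cross A hsymm hconn ⟨q, hqS⟩ hcompl
      have hba : (1 : ℤ) ≤ (A b a : ℤ) := by
        rw [hsymm b a]; exact_mod_cast hab
      set x : ℤ := B ^ (n - S.card - 1) with hxdef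
      have hx1 : 1 ≤ x := one_le_pow₀ hB
      have hexp : n - S.card = (n - S.card - 1) + 1 := by omega
      have hBx : B ^ (n - S.card) = x * B := by
        rw [hexp, pow_succ]
      have hf0 : ∀ u, 0 ≤ f u := by
        intro u
        by_cases hu : u ∈ S
        · exact le_trans (pow_nonneg (by omega) _) (hlow u hu)
        · rw [hout u hu]
      set g : V → ℤ := fun u => if u = b then x else 0 with hgdef
      set f' : V → ℤ := fun u => f u + g u with hf'def
      have hlapg : ∀ v, lapApply A g v
          = (if v = b then (∑ w, (A v w : ℤ)) * x else 0) - (A v b : ℤ) * x := by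
        intro v
        have hsum : ∑ w, (A v w : ℤ) * g w = (A v b : ℤ) * x := by
          rw [hgdef]
          simp [mul_ite]
        rw [lapApply, hsum, hgdef]
        by_cases hv : v = b <;> simp [hv]
      refine ⟨insert b S, Finset.mem_insert_of_mem hqS, ?_, f', ?_, ?_, ?_⟩
      · right
        rw [Finset.card_insert_of_notMem hbS]
        rcases hcard with h | h
        · exact absurd h hSuniv
        · omega
      · intro v hv
        rw [Finset.mem_insert] at hv
        push_neg at hv
        simp only [hf'def, hgdef]
        rw [hout v hv.2]
        simp [hv.1]
      · intro v hv
        rw [Finset.mem_insert] at hv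
        have hcardins : (insert b S).card = S.card + 1 :=
          Finset.card_insert_of_notMem hbS
        have hexp2 : n - (insert b S).card = n - S.card - 1 := by
          rw [hcardins]; omega
        rw [hexp2]
        rcases hv with rfl | hv
        · simp only [hf'def, hgdef]
          rw [hout v hbS]
          simp [hxdef]
        · have hvb : v ≠ b := fun h => hbS (h ▸ hv)
          have : B ^ (n - S.card) ≤ f v := hlow v hv
          have hfv : f' v = f v := by simp [hf'def, hgdef, hvb]
          rw [hfv]
          calc x = x * 1 := (mul_one x).symm
            _ ≤ x * B := by
              apply mul_le_mul_of_nonneg_left hB (by omega)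
            _ = B ^ (n - S.card) := hBx.symm
            _ ≤ f v := this
      · intro v hv hvq
        rw [Finset.mem_insert] at hv
        have hlap' : lapApply A f' v = lapApply A f v + lapApply A g v :=
          lap_add A f g v
        rcases hv with rfl | hv
        · -- v = b
          have hlapf : lapApply A f v ≤ -(x * B) := by
            rw [lapApply, hout v hbS, mul_zero, zero_sub, neg_le_neg_iff]
            calc x * B = B ^ (n - S.card) := hBx.symm
              _ ≤ f a := hlow a haS
              _ = 1 * f a := (one_mul _).symm
              _ ≤ (A v a : ℤ) * f a := by
                apply mul_le_mul_of_nonneg_right hba (hf0 a)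
              _ ≤ ∑ w, (A v w : ℤ) * f w := by
                apply Finset.single_le_sum (f := fun w => (A v w : ℤ) * f w)
                  (fun u _ => mul_nonneg (Int.natCast_nonneg _) (hf0 u)) (Finset.mem_univ a)
          have hlapg' : lapApply A g v ≤ Δ * x := by
            rw [hlapg v]
            rw [if_pos rfl]
            have h1 : (∑ w, (A v w : ℤ)) * x ≤ Δ * x :=
              mul_le_mul_of_nonneg_right (hdegΔ v) (by omega)
            have h2 : 0 ≤ (A v v : ℤ) * x :=
              mul_nonneg (Int.natCast_nonneg _) (by omega)
            omega
          have : lapApply A f' v ≤ Δ * x - x * B := by omega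
          have hfin : Δ * x - x * B = -(x * (C + 1)) := by
            rw [hBdef]; ring
          have hxc : C + 1 ≤ x * (C + 1) := le_mul_of_one_le_left (by omega) hx1
          have := hDlow v
          omega
        · -- v ∈ S
          have hlapg' : lapApply A g v ≤ 0 := by
            rw [hlapg v]
            have hvb : v ≠ b := fun h => hbS (h ▸ hv)
            simp only [if_neg hvb]
            have : 0 ≤ (A v b : ℤ) * x := mul_nonneg (Int.natCast_nonneg _) (by omega)
            omega
          have := hcon v hv hvq
          omega
  obtain ⟨S, hqS, hcard, f, hout, hlow, hcon⟩ := main n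
  have hSuniv : S = univ := by
    rcases hcard with h | h
    · exact h
    · apply Finset.eq_univ_of_card
      have := Finset.card_le_univ S
      rw [← hn] at *
      omega
  refine ⟨fun u => f u + (-f q), by ring, ?_⟩
  intro v hvq
  rw [lap_shift]
  exact hcon v (hSuniv ▸ Finset.mem_univ v) hvq


private lemma bounded_above (A : V → V → ℕ) (hsymm : ∀ v w, A v w = A w v)
    (hconn : (SimpleGraph.fromRel fun v w => 0 < A v w).Connected)
    (D : V → ℤ) (q : V) (f : V → ℤ) (hq : f q = 0)
    (hsup : ∀ v, v ≠ q → lapApply A f v ≤ D v) :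
    ∀ v, f v ≤ (Fintype.card V : ℤ) * ((∑ u, |D u|) + 1) := by
  set n := Fintype.card V with hn
  set C : ℤ := ∑ u, |D u| with hCdef
  have hC : 0 ≤ C := Finset.sum_nonneg fun v _ => abs_nonneg _
  by_contra hcon'
  push_neg at hcon'
  obtain ⟨v₀, hv₀⟩ := hcon'
  set S : ℤ → Finset V := fun t => univ.filter (fun u => t ≤ f u) with hSdef
  set t : ℕ → ℤ := fun k => 1 + (k : ℤ) * (C + 1) with htdef
  have hmem : ∀ k u, u ∈ S (t k) ↔ t k ≤ f u := by
    intro k u; simp [hSdef]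
  have hv₀mem : ∀ k : ℕ, k ≤ n → v₀ ∈ S (t k) := by
    intro k hk
    rw [hmem]
    have : (k : ℤ) ≤ (n : ℤ) := by exact_mod_cast hk
    have h2 : (k : ℤ) * (C + 1) ≤ (n : ℤ) * (C + 1) :=
      mul_le_mul_of_nonneg_right this (by omega)
    simp only [htdef]
    omega
  have hqmem : ∀ k : ℕ, q ∉ S (t k) := by
    intro k
    rw [hmem, hq]
    simp only [htdef]
    have : (0 : ℤ) ≤ (k : ℤ) * (C + 1) :=
      mul_nonneg (Int.natCast_nonneg _) (by omega)
    omega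
  have hcard : ∀ k : ℕ, k ≤ n → (S (t k)).card ∈ Finset.Icc 1 (n - 1) := by
    intro k hk
    rw [Finset.mem_Icc]
    constructor
    · exact Finset.card_pos.mpr ⟨v₀, hv₀mem k hk⟩
    · have hsub : S (t k) ⊆ univ.erase q := by
        intro u hu
        rw [Finset.mem_erase]
        exact ⟨fun h => hqmem k (h ▸ hu), Finset.mem_univ u⟩
      calc (S (t k)).card ≤ (univ.erase q).card := Finset.card_le_card hsub
        _ = n - 1 := by rw [Finset.card_erase_of_mem (Finset.mem_univ q), Finset.card_univ]
  have hpigeon : ∃ i ∈ Finset.range (n + 1), ∃ j ∈ Finset.range (n + 1),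
      i ≠ j ∧ (S (t i)).card = (S (t j)).card := by
    refine Finset.exists_ne_map_eq_of_card_lt_of_maps_to (t := Finset.Icc 1 (n - 1)) ?_ ?_
    · rw [Finset.card_range, Nat.card_Icc]
      omega
    · intro k hk
      exact hcard k (Nat.lt_succ_iff.mp (Finset.mem_range.mp hk))
  obtain ⟨i, hi, j, hj, hij, hcardeq⟩ := hpigeon
  -- wlog i < j
  wlog hlt : i < j generalizing i j
  · exact this j hj i hi hij.symm hcardeq.symm (by omega)
  have hti_le : t i ≤ t j := by
    simp only [htdef]
    have : (i : ℤ) * (C+1) ≤ (j : ℤ) * (C+1) :=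
      mul_le_mul_of_nonneg_right (by exact_mod_cast hlt.le) (by omega)
    omega
  have hsub : S (t j) ⊆ S (t i) := fun u hu =>
    (hmem i u).mpr (le_trans hti_le ((hmem j u).mp hu))
  have hTeq : S (t i) = S (t j) :=
    (Finset.eq_of_subset_of_card_le hsub (le_of_eq hcardeq)).symm
  set T := S (t i) with hTdef
  have hTne : T.Nonempty := ⟨v₀, hv₀mem i (Nat.lt_succ_iff.mp (Finset.mem_range.mp hi))⟩
  have hTcne : Tᶜ.Nonempty := ⟨q, Finset.mem_compl.mpr (hqmem i)⟩
  obtain ⟨a, haT, b, hbT, hab⟩ := cross A hsymm hconn hTne hTcne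
  -- gap: for v ∈ T, w ∉ T : f v - f w ≥ C + 2
  have hgap : ∀ v ∈ T, ∀ w, w ∉ T → C + 2 ≤ f v - f w := by
    intro v hv w hw
    have h1 : t j ≤ f v := (hmem j v).mp (hTeq ▸ hv)
    have h2 : ¬ t i ≤ f w := fun h => hw ((hmem i w).mpr h)
    have h3 : t i + (C + 1) ≤ t j := by
      simp only [htdef]
      have : (i : ℤ) + 1 ≤ (j : ℤ) := by exact_mod_cast hlt
      nlinarith
    omega
  have hterm_nonneg : ∀ v ∈ T, ∀ w ∈ Tᶜ, 0 ≤ (A v w : ℤ) * (f v - f w) := by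
    intro v hv w hw
    rw [Finset.mem_compl] at hw
    exact mul_nonneg (Int.natCast_nonneg _) (by have := hgap v hv w hw; omega)
  have hlower : C + 2 ≤ ∑ v ∈ T, ∑ w ∈ Tᶜ, (A v w : ℤ) * (f v - f w) := by
    have hba : C + 2 ≤ (A a b : ℤ) * (f a - f b) := by
      have h1 : (1 : ℤ) ≤ (A a b : ℤ) := by exact_mod_cast hab
      have h2 := hgap a haT b hbT
      nlinarith
    calc C + 2 ≤ (A a b : ℤ) * (f a - f b) := hba
      _ ≤ ∑ w ∈ Tᶜ, (A a w : ℤ) * (f a - f w) :=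
          Finset.single_le_sum (fun w hw => hterm_nonneg a haT w hw)
            (Finset.mem_compl.mpr hbT)
      _ ≤ ∑ v ∈ T, ∑ w ∈ Tᶜ, (A v w : ℤ) * (f v - f w) :=
          Finset.single_le_sum
            (fun v hv => Finset.sum_nonneg fun w hw => hterm_nonneg v hv w hw) haT
  have hupper : ∑ v ∈ T, ∑ w ∈ Tᶜ, (A v w : ℤ) * (f v - f w) ≤ C := by
    rw [← lap_sum_subset A hsymm f T]
    calc ∑ v ∈ T, lapApply A f v ≤ ∑ v ∈ T, D v := by
          apply Finset.sum_le_sum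
          intro v hv
          exact hsup v (fun h => hqmem i (h ▸ hv))
      _ ≤ ∑ v ∈ T, |D v| := Finset.sum_le_sum fun v _ => le_abs_self _
      _ ≤ ∑ v, |D v| :=
          Finset.sum_le_sum_of_subset_of_nonneg (Finset.subset_univ T)
            (fun v _ _ => abs_nonneg _)
  omega

end BakerNorineAux

/-- Every divisor of degree at least the genus `g = |E| - |V| + 1` on a finite connected
loopless multigraph is linearly equivalent to an effective divisor: there is `f : V → ℤ`
with `D - L f` nonnegative at every vertex. -/
theorem winnable_of_genus_le_degree {V : Type*} [Fintype V] (A : V → V → ℕ)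
    (hsymm : ∀ v w, A v w = A w v) (hdiag : ∀ v, A v v = 0)
    (hconn : (SimpleGraph.fromRel fun v w => 0 < A v w).Connected)
    (g : ℤ) (hg : 2 * g = (∑ v, ∑ w, (A v w : ℤ)) - 2 * (Fintype.card V : ℤ) + 2)
    (D : V → ℤ) (hdeg : g ≤ ∑ v, D v) :
    ∃ f : V → ℤ, ∀ v, 0 ≤ D v - lapApply A f v := by
  classical
  have hne : Nonempty V := hconn.nonempty
  obtain ⟨q⟩ := hne
  set n : ℕ := Fintype.card V with hn
  set C : ℤ := ∑ u, |D u| with hC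
  obtain ⟨f₀, hf₀q, hf₀⟩ := exists_effective_off A hsymm hdiag hconn D q
  set P : ℤ → Prop := fun s => ∃ f : V → ℤ, f q = 0 ∧ (∀ v, f₀ v ≤ f v) ∧
    (∀ v, v ≠ q → lapApply A f v ≤ D v) ∧ ∑ v, f v = s with hP
  have hbdd : ∃ b : ℤ, ∀ s, P s → s ≤ b := by
    refine ⟨(n : ℤ) * ((n : ℤ) * (C + 1)), ?_⟩
    rintro s ⟨f, hfq, -, hfsup, rfl⟩
    have hb := bounded_above A hsymm hconn D q f hfq hfsup
    calc ∑ v, f v ≤ ∑ _v : V, (n : ℤ) * (C + 1) := Finset.sum_le_sum fun v _ => hb v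
      _ = (n : ℤ) * ((n : ℤ) * (C + 1)) := by
        rw [Finset.sum_const, Finset.card_univ]
        push_cast [hn]
        ring
  have hinh : ∃ s, P s := ⟨∑ v, f₀ v, f₀, hf₀q, fun v => le_refl _, hf₀, rfl⟩
  obtain ⟨s, ⟨F, hFq, hFlow, hFsup, hFsum⟩, hmax⟩ := Int.exists_greatest_of_bdd
    (P := P) hbdd hinh
  set D' : V → ℤ := fun v => D v - lapApply A F v with hD'def
  have hD' : ∀ v, D' v = D v - lapApply A F v := fun _ => rfl
  -- reducedness
  have hred : ∀ S : Finset V, S ⊆ univ.erase q → S.Nonempty →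
      ∃ v ∈ S, D' v + 1 ≤ ∑ w ∈ Sᶜ, (A v w : ℤ) := by
    intro S hSq hSne
    by_contra hcon'
    push_neg at hcon'
    have hout : ∀ v ∈ S, ∑ w ∈ Sᶜ, (A v w : ℤ) ≤ D' v := by
      intro v hv
      have := hcon' v hv
      omega
    have hqS : q ∉ S := fun h => (Finset.notMem_erase q univ) (hSq h)
    set ind : V → ℤ := fun u => if u ∈ S then 1 else 0 with hind
    have hlapind : ∀ v, lapApply A ind v
        = (if v ∈ S then (∑ w, (A v w : ℤ)) else 0) - ∑ w ∈ S, (A v w : ℤ) := by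
      intro v
      rw [lapApply]
      congr 1
      · rw [hind]
        by_cases hv : v ∈ S <;> simp [hv]
      · rw [hind]
        simp only [mul_ite, mul_one, mul_zero]
        exact Fintype.sum_ite_mem S fun w => (A v w : ℤ)
    have hsplit : ∀ v, (∑ w ∈ S, (A v w : ℤ)) + ∑ w ∈ Sᶜ, (A v w : ℤ) = ∑ w, (A v w : ℤ) :=
      fun v => Finset.sum_add_sum_compl S _
    set F' : V → ℤ := fun u => F u + ind u with hF'
    have hF'P : P (s + S.card) := by
      refine ⟨F', ?_, ?_, ?_, ?_⟩
      · simp only [hF', hind, if_neg hqS]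
        omega
      · intro v
        have h0 : (0 : ℤ) ≤ ind v := by by_cases h : v ∈ S <;> simp [hind, h]
        have := hFlow v
        simp only [hF']
        omega
      · intro v hvq
        have hla : lapApply A F' v = lapApply A F v + lapApply A ind v := lap_add A F ind v
        by_cases hv : v ∈ S
        · have h1 : lapApply A ind v = ∑ w ∈ Sᶜ, (A v w : ℤ) := by
            rw [hlapind v, if_pos hv, ← hsplit v]
            ring
          have h2 := hout v hv
          rw [hD' v] at h2
          omega
        · have h1 : lapApply A ind v ≤ 0 := by
            rw [hlapind v, if_neg hv]
            have : 0 ≤ ∑ w ∈ S, (A v w : ℤ) :=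
              Finset.sum_nonneg fun w _ => Int.natCast_nonneg _
            omega
          have h2 := hFsup v hvq
          omega
      · simp only [hF']
        rw [Finset.sum_add_distrib, hFsum, hind]
        congr 1
        rw [Fintype.sum_ite_mem S (fun _ => (1 : ℤ))]
        simp
    have hle := hmax _ hF'P
    have hcard : 1 ≤ S.card := Finset.card_pos.mpr hSne
    have : (1 : ℤ) ≤ (S.card : ℤ) := by exact_mod_cast hcard
    omega
  -- counting
  have hcount := counting A hsymm hdiag D' q hred (univ.erase q) (subset_refl _)
  -- compute E2 of univ.erase q
  have hdegq : ∑ w, (A q w : ℤ) = ∑ v, (A v q : ℤ) :=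
    Finset.sum_congr rfl fun v _ => by rw [hsymm]
  have hE2a : ∑ a ∈ univ.erase q, ∑ w, (A a w : ℤ)
      = (∑ v, ∑ w, (A v w : ℤ)) - ∑ w, (A q w : ℤ) := by
    rw [eq_sub_iff_add_eq]
    exact Finset.sum_erase_add univ (fun a => ∑ w, (A a w : ℤ)) (Finset.mem_univ q)
  have hcomplq : (univ.erase q)ᶜ = {q} := by
    rw [Finset.compl_erase]
    simp
  have hE2b : ∑ a ∈ univ.erase q, ∑ w ∈ (univ.erase q)ᶜ, (A a w : ℤ)
      = ∑ w, (A q w : ℤ) := by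
    rw [hcomplq]
    simp only [Finset.sum_singleton]
    have h2 := Finset.sum_erase_add univ (fun a => (A a q : ℤ)) (Finset.mem_univ q)
    simp only [hdiag q, Nat.cast_zero, add_zero] at h2
    rw [hdegq]
    omega
  have hsumD' : ∑ v ∈ univ.erase q, D' v + D' q = ∑ v, D' v :=
    Finset.sum_erase_add univ D' (Finset.mem_univ q)
  have hsumD'univ : ∑ v, D' v = ∑ v, D v := by
    have h1 : ∑ v, D' v = ∑ v, D v - ∑ v, lapApply A F v := by
      simp only [hD'def]
      rw [Finset.sum_sub_distrib]
    rw [h1, lap_sum_univ A hsymm F, sub_zero]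
  have hcardfull : ((univ.erase q).card : ℤ) = (n : ℤ) - 1 := by
    rw [Finset.card_erase_of_mem (Finset.mem_univ q), Finset.card_univ]
    have h1 : 1 ≤ Fintype.card V := Fintype.card_pos_iff.mpr ⟨q⟩
    push_cast [Nat.cast_sub h1]
    rw [hn]
  rw [hE2a, hE2b, hcardfull] at hcount
  -- conclusion
  refine ⟨F, fun v => ?_⟩
  by_cases hv : v = q
  · subst hv
    rw [← hD' v]
    have hq1 := hsumD'
    have hq2 := hsumD'univ
    omega
  · have := hFsup v hv
    omega
end

section
/- Let G be a finite connected loopless multigraph with genus g = |E| − |V| + 1 and g ≥ 1. Then there exists a divisor D on G of degree g − 1 that is not linearly equivalent to any effective divisor; that is, for every f : V → ℤ, the divisor D − L f has a negative value at some vertex. -/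
open Finset

/-- On a finite connected loopless multigraph of genus `g ≥ 1` there exists a divisor of
degree `g - 1` that is not linearly equivalent to any effective divisor: for every
`f : V → ℤ` the divisor `D - L f` is negative at some vertex. -/
theorem exists_nonwinnable_divisor_of_degree_genus_sub_one {V : Type*} [Fintype V]
    (A : V → V → ℕ)
    (hsymm : ∀ v w, A v w = A w v) (hdiag : ∀ v, A v v = 0)
    (hconn : (SimpleGraph.fromRel fun v w => 0 < A v w).Connected)
    (g : ℤ) (hg : 2 * g = (∑ v, ∑ w, (A v w : ℤ)) - 2 * (Fintype.card V : ℤ) + 2)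
    (hg1 : 1 ≤ g) :
    ∃ D : V → ℤ, (∑ v, D v) = g - 1 ∧ ∀ f : V → ℤ, ∃ v, D v - lapApply A f v < 0 := by
  classical
  have hne : Nonempty V := hconn.nonempty
  obtain ⟨v0⟩ := hne
  let e := Fintype.equivFin V
  refine ⟨fun v => (∑ w ∈ univ.filter (fun w => e w < e v), (A v w : ℤ)) - 1, ?_, ?_⟩
  · -- degree computation
    have hswap : ∑ v, ∑ w ∈ univ.filter (fun w => e v < e w), (A v w : ℤ)
        = ∑ v, ∑ w ∈ univ.filter (fun w => e w < e v), (A v w : ℤ) := by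
      calc ∑ v, ∑ w ∈ univ.filter (fun w => e v < e w), (A v w : ℤ)
          = ∑ v, ∑ w, if e v < e w then (A v w : ℤ) else 0 := by
            simp [Finset.sum_filter]
        _ = ∑ w, ∑ v, if e v < e w then (A v w : ℤ) else 0 := Finset.sum_comm
        _ = ∑ w, ∑ v ∈ univ.filter (fun v => e v < e w), (A v w : ℤ) := by
            simp [Finset.sum_filter]
        _ = ∑ w, ∑ v ∈ univ.filter (fun v => e v < e w), (A w v : ℤ) := by
            refine Finset.sum_congr rfl fun w _ => Finset.sum_congr rfl fun v _ => ?_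
            exact_mod_cast hsymm v w
    have hsplit : ∀ v : V, ∑ w, (A v w : ℤ)
        = ∑ w ∈ univ.filter (fun w => e w < e v), (A v w : ℤ)
          + ∑ w ∈ univ.filter (fun w => e v < e w), (A v w : ℤ) := by
      intro v
      rw [← Finset.sum_filter_add_sum_filter_not univ (fun w => e w < e v)
        (fun w => (A v w : ℤ))]
      congr 1
      have hfil : univ.filter (fun w => ¬ e w < e v)
          = insert v (univ.filter (fun w => e v < e w)) := by
        ext w
        simp only [Finset.mem_filter, Finset.mem_univ, true_and, Finset.mem_insert, not_lt]
        constructor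
        · intro h
          rcases lt_or_eq_of_le h with h' | h'
          · exact Or.inr h'
          · exact Or.inl (e.injective h'.symm)
        · rintro (rfl | h)
          · exact le_refl _
          · exact le_of_lt h
      rw [hfil, Finset.sum_insert (by simp)]
      simp [hdiag v]
    have hkey : ∑ v, ∑ w, (A v w : ℤ)
        = 2 * ∑ v, ∑ w ∈ univ.filter (fun w => e w < e v), (A v w : ℤ) := by
      calc ∑ v, ∑ w, (A v w : ℤ)
          = ∑ v, (∑ w ∈ univ.filter (fun w => e w < e v), (A v w : ℤ)
              + ∑ w ∈ univ.filter (fun w => e v < e w), (A v w : ℤ)) :=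
            Finset.sum_congr rfl fun v _ => hsplit v
        _ = (∑ v, ∑ w ∈ univ.filter (fun w => e w < e v), (A v w : ℤ))
              + ∑ v, ∑ w ∈ univ.filter (fun w => e v < e w), (A v w : ℤ) :=
            Finset.sum_add_distrib
        _ = 2 * ∑ v, ∑ w ∈ univ.filter (fun w => e w < e v), (A v w : ℤ) := by
            rw [hswap]; ring
    have hsum : ∑ v, ((∑ w ∈ univ.filter (fun w => e w < e v), (A v w : ℤ)) - 1)
        = (∑ v, ∑ w ∈ univ.filter (fun w => e w < e v), (A v w : ℤ)) - Fintype.card V := by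
      rw [Finset.sum_sub_distrib]
      simp [Finset.card_univ]
    rw [hsum]
    linarith
  · intro f
    obtain ⟨vmax, -, hvmax⟩ := Finset.exists_max_image univ f ⟨v0, mem_univ v0⟩
    have hsne : (univ.filter fun v => ∀ w, f w ≤ f v).Nonempty :=
      ⟨vmax, Finset.mem_filter.mpr ⟨mem_univ _, fun w => hvmax w (mem_univ w)⟩⟩
    obtain ⟨v, hvs, hvmin⟩ := Finset.exists_min_image _ (fun v => e v) hsne
    have hvmaxf : ∀ w, f w ≤ f v := (Finset.mem_filter.mp hvs).2
    refine ⟨v, ?_⟩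
    have hlap : lapApply A f v = ∑ w, (A v w : ℤ) * (f v - f w) := by
      unfold lapApply
      rw [Finset.sum_mul, ← Finset.sum_sub_distrib]
      exact Finset.sum_congr rfl fun w _ => by ring
    have hbound : ∑ w ∈ univ.filter (fun w => e w < e v), (A v w : ℤ)
        ≤ ∑ w, (A v w : ℤ) * (f v - f w) := by
      rw [← Finset.sum_filter_add_sum_filter_not univ (fun w => e w < e v)
        (fun w => (A v w : ℤ) * (f v - f w))]
      have h1 : ∑ w ∈ univ.filter (fun w => e w < e v), (A v w : ℤ)
          ≤ ∑ w ∈ univ.filter (fun w => e w < e v), (A v w : ℤ) * (f v - f w) := by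
        refine Finset.sum_le_sum fun w hw => ?_
        have hw' : e w < e v := (Finset.mem_filter.mp hw).2
        have hws : w ∉ univ.filter fun v => ∀ u, f u ≤ f v := by
          intro h
          exact absurd (hvmin w h) (not_le.mpr hw')
        have hlt : f w < f v := by
          rcases lt_or_eq_of_le (hvmaxf w) with h | h
          · exact h
          · exact absurd (Finset.mem_filter.mpr ⟨mem_univ w, fun u => h ▸ hvmaxf u⟩) hws
        have h1' : (1 : ℤ) ≤ f v - f w := by linarith
        calc (A v w : ℤ) = (A v w : ℤ) * 1 := by ring
          _ ≤ (A v w : ℤ) * (f v - f w) :=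
            mul_le_mul_of_nonneg_left h1' (Int.natCast_nonneg _)
      have h2 : 0 ≤ ∑ w ∈ univ.filter (fun w => ¬ e w < e v), (A v w : ℤ) * (f v - f w) :=
        Finset.sum_nonneg fun w _ =>
          mul_nonneg (Int.natCast_nonneg _) (by linarith [hvmaxf w])
      linarith
    rw [hlap]
    show (∑ w ∈ univ.filter (fun w => e w < e v), (A v w : ℤ)) - 1
        - ∑ w, (A v w : ℤ) * (f v - f w) < 0
    linarith
end

section
/- (Riemann–Roch for trees) Let T be a finite tree (a connected acyclic simple graph) with at least one vertex, and let K be its canonical divisor, K(v) = deg(v) − 2. Then for every divisor D on T, r(D) − r(K − D) = deg(D) + 1, where r denotes the rank of a divisor (note the genus of a tree is 0). -/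
/-!
In a tree every edge `uv` is a bridge, and firing the side of the bridge that contains `u`
moves one chip from `v` to `u`. Chaining such moves along paths shows that every divisor of
degree `0` is principal, so a divisor is winnable exactly when its degree is nonnegative and
`r(D) = max (deg D) (-1)`. Since `deg K = 2|E| - 2|V| = -2`, the formula becomes arithmetic.
-/

open Finset

/-- The degree of a vertex of a simple graph: the number of its neighbors. -/
noncomputable def degS {V : Type*} (G : SimpleGraph V) (v : V) : ℕ :=
  {u | G.Adj v u}.ncard

open Classical in
/-- The Laplacian matrix of a simple graph `G`:
`L v v = deg v`, `L v w = -1` if `v w` is an edge, and `0` otherwise. -/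
noncomputable def lapS {V : Type*} (G : SimpleGraph V) (v w : V) : ℤ :=
  if v = w then (degS G v : ℤ) else if G.Adj v w then -1 else 0

/-- The Laplacian applied to a firing function `f`, evaluated at `v`. -/
noncomputable def lapApplyS {V : Type*} [Fintype V] (G : SimpleGraph V)
    (f : V → ℤ) (v : V) : ℤ :=
  ∑ w, lapS G v w * f w

/-- A divisor is winnable if it is linearly equivalent to an effective divisor. -/
def WinnableS {V : Type*} [Fintype V] (G : SimpleGraph V) (D : V → ℤ) : Prop :=
  ∃ f : V → ℤ, ∀ v, 0 ≤ D v - lapApplyS G f v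

/-- The Baker–Norine rank of a divisor on a simple graph. -/
noncomputable def rankS {V : Type*} [Fintype V] (G : SimpleGraph V) (D : V → ℤ) : ℤ :=
  sSup {r : ℤ | ∀ E : V → ℤ, (∀ v, 0 ≤ E v) → (∑ v, E v) = r →
    WinnableS G (fun v => D v - E v)}

open SimpleGraph Matrix

namespace SimpleGraph

variable {V R : Type*} [Fintype V] {G : SimpleGraph V} [DecidableRel G.Adj]

lemma IsTree.sum_degree (hT : G.IsTree) : ∑ v, (G.degree v : ℤ) = 2 * Fintype.card V - 2 := by
  rw [← Nat.cast_sum, G.sum_degrees_eq_twice_card_edges, ← hT.card_edgeFinset]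
  push_cast
  ring

variable [DecidableEq V] [CommRing R]

lemma sum_lapMatrix_mulVec (f : V → R) : ∑ v, (G.lapMatrix R *ᵥ f) v = 0 :=
  calc ∑ v, (G.lapMatrix R *ᵥ f) v = (fun _ ↦ 1) ⬝ᵥ (G.lapMatrix R *ᵥ f) := by
        simp [dotProduct]
    _ = (G.lapMatrix R *ᵥ fun _ ↦ 1) ⬝ᵥ f := by
        rw [dotProduct_mulVec, ← mulVec_transpose, (G.isSymm_lapMatrix (R := R)).eq]
    _ = 0 := by rw [lapMatrix_mulVec_const_eq_zero, zero_dotProduct]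

lemma lapMatrix_mulVec_eq_of_forall_adj {u v : V} (huv : G.Adj u v) {f : V → R}
    (hf : ∀ x w, G.Adj x w → s(x, w) ≠ s(u, v) → f x = f w) :
    G.lapMatrix R *ᵥ f = (f u - f v) • (Pi.single u 1 - Pi.single v 1) := by
  ext x
  have hsum : (G.lapMatrix R *ᵥ f) x = ∑ w ∈ G.neighborFinset x, (f x - f w) := by
    simp [lapMatrix_mulVec_apply, sum_sub_distrib]
  rw [hsum]
  by_cases hxu : x = u
  · subst hxu
    rw [sum_eq_single v]
    · simp [huv.ne]
    · intro w hw hwv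
      rw [hf x w ((mem_neighborFinset _ _ _).mp hw) (by simp [hwv, huv.ne]), sub_self]
    · simp [huv]
  by_cases hxv : x = v
  · subst hxv
    rw [sum_eq_single u]
    · simp [huv.ne]
    · intro w hw hwu
      rw [hf x w ((mem_neighborFinset _ _ _).mp hw) (by simp [hwu, huv.ne']), sub_self]
    · simp [huv.symm]
  · refine (sum_eq_zero fun w hw ↦ ?_).trans (by simp [hxu, hxv])
    rw [hf x w ((mem_neighborFinset _ _ _).mp hw) (by simp [hxu, hxv]), sub_self]

lemma IsBridge.single_sub_single_mem_range_lapMatrix {u v : V} (hb : G.IsBridge s(u, v))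
    (huv : G.Adj u v) :
    Pi.single u 1 - Pi.single v 1 ∈ LinearMap.range (G.lapMatrix R).mulVecLin := by
  classical
  set H := G.deleteEdges {s(u, v)}
  refine ⟨fun y ↦ if H.Reachable u y then 1 else 0, ?_⟩
  rw [mulVecLin_apply, lapMatrix_mulVec_eq_of_forall_adj huv]
  · have hvu : ¬ H.Reachable u v := isBridge_iff.mp hb
    simp [hvu]
  · intro x w hxw hne
    have hH : H.Adj x w := (deleteEdges_adj ..).mpr ⟨hxw, hne⟩
    have hiff : H.Reachable u x ↔ H.Reachable u w :=
      ⟨(·.trans hH.reachable), (·.trans hH.symm.reachable)⟩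
    simp only [hiff]

lemma IsAcyclic.single_sub_single_mem_range_lapMatrix (hG : G.IsAcyclic) {a b : V}
    (hab : G.Reachable a b) :
    Pi.single a 1 - Pi.single b 1 ∈ LinearMap.range (G.lapMatrix R).mulVecLin := by
  obtain ⟨p⟩ := hab
  induction p with
  | nil => simp
  | @cons a c b hac p ih =>
    have hedge := (isAcyclic_iff_forall_adj_isBridge.mp hG hac).single_sub_single_mem_range_lapMatrix
      (R := R) hac
    simpa using add_mem hedge ih

lemma IsTree.mem_range_lapMatrix_iff (hT : G.IsTree) {B : V → R} :
    B ∈ LinearMap.range (G.lapMatrix R).mulVecLin ↔ ∑ v, B v = 0 := by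
  constructor
  · rintro ⟨f, rfl⟩
    exact sum_lapMatrix_mulVec f
  · intro hB
    obtain ⟨v₀⟩ := hT.connected.nonempty
    have hB' : B = ∑ v, B v • (Pi.single v 1 - Pi.single v₀ 1) := by
      ext x
      simp [Finset.sum_apply, Pi.single_apply, mul_sub, sum_sub_distrib, hB]
    rw [hB']
    exact Submodule.sum_mem _ fun v _ ↦ Submodule.smul_mem _ _
      (hT.isAcyclic.single_sub_single_mem_range_lapMatrix (hT.connected v v₀))

end SimpleGraph

section

variable {V : Type*} [Fintype V]

lemma degS_eq_degree (G : SimpleGraph V) [DecidableRel G.Adj] (v : V) :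
    degS G v = G.degree v := by
  rw [degS, ← card_neighborSet_eq_degree, ← Nat.card_eq_fintype_card, Nat.card_coe_set_eq]
  rfl

lemma lapApplyS_eq_lapMatrix_mulVec (G : SimpleGraph V) [DecidableEq V] [DecidableRel G.Adj]
    (f : V → ℤ) : lapApplyS G f = G.lapMatrix ℤ *ᵥ f := by
  ext v
  simp only [lapApplyS, mulVec, dotProduct, lapMatrix, degMatrix, Matrix.sub_apply,
    diagonal_apply, adjMatrix_apply, lapS, degS_eq_degree]
  congr! 2 with w
  split_ifs <;> simp_all

lemma winnableS_iff {G : SimpleGraph V} (hT : G.IsTree) (D : V → ℤ) :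
    WinnableS G D ↔ 0 ≤ ∑ v, D v := by
  classical
  constructor
  · rintro ⟨f, hf⟩
    have hdeg : ∑ v, (D v - lapApplyS G f v) = ∑ v, D v := by
      rw [sum_sub_distrib, lapApplyS_eq_lapMatrix_mulVec, sum_lapMatrix_mulVec, sub_zero]
    exact hdeg ▸ sum_nonneg fun v _ ↦ hf v
  · intro hD
    obtain ⟨v₀⟩ := hT.connected.nonempty
    obtain ⟨f, hf⟩ : D - Pi.single v₀ (∑ v, D v) ∈ LinearMap.range (G.lapMatrix ℤ).mulVecLin := by
      simp [hT.mem_range_lapMatrix_iff, sum_sub_distrib]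
    refine ⟨f, fun v ↦ ?_⟩
    rw [lapApplyS_eq_lapMatrix_mulVec, ← mulVecLin_apply, hf]
    simp only [Pi.sub_apply, Pi.single_apply, sub_sub_cancel]
    split_ifs <;> omega

lemma rankS_eq {G : SimpleGraph V} (hT : G.IsTree) (D : V → ℤ) :
    rankS G D = max (∑ v, D v) (-1) := by
  classical
  obtain ⟨v₀⟩ := hT.connected.nonempty
  suffices h : {r : ℤ | ∀ E : V → ℤ, (∀ v, 0 ≤ E v) → (∑ v, E v) = r →
      WinnableS G (fun v => D v - E v)} = Set.Iic (max (∑ v, D v) (-1)) by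
    rw [rankS, h, csSup_Iic]
  ext r
  simp only [Set.mem_ofPred_eq, Set.mem_Iic, winnableS_iff hT, sum_sub_distrib]
  constructor
  · intro hr
    by_contra! hlt
    have hE : ∀ v, 0 ≤ Pi.single (M := fun _ ↦ ℤ) v₀ r v := fun v ↦ by
      rw [Pi.single_apply]
      split_ifs <;> omega
    have hdeg : ∑ v, Pi.single (M := fun _ ↦ ℤ) v₀ r v = r := by simp
    have := hr _ hE hdeg
    omega
  · rintro hr E hE rfl
    have := sum_nonneg fun v (_ : v ∈ univ) ↦ hE v
    omega

end

theorem riemann_roch_for_trees_general {V : Type*} [Fintype V]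
    (G : SimpleGraph V) (hT : G.IsTree) (D : V → ℤ) :
    rankS G D - rankS G (fun v => ((degS G v : ℤ) - 2) - D v) = (∑ v, D v) + 1 := by
  classical
  have hK : ∑ v, ((degS G v : ℤ) - 2 - D v) = -2 - ∑ v, D v := by
    simp only [degS_eq_degree, sum_sub_distrib, hT.sum_degree, sum_const,
      card_univ, nsmul_eq_mul]
    ring
  rw [rankS_eq hT, rankS_eq hT, hK]
  omega

/-- **Riemann–Roch for trees.**
For a finite tree `T` (a connected acyclic simple graph) with at least one vertex,
canonical divisor `K v = deg v - 2`, and any divisor `D`,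
`r(D) - r(K - D) = deg D + 1` (the genus of a tree being `0`). -/
theorem riemann_roch_for_trees {V : Type*} [Fintype V] [Nonempty V]
    (G : SimpleGraph V) (hT : G.IsTree) (D : V → ℤ) :
    rankS G D - rankS G (fun v => ((degS G v : ℤ) - 2) - D v) = (∑ v, D v) + 1 :=
  riemann_roch_for_trees_general G hT D
end

section
/- Let G be a finite connected simple graph with at least two vertices, let u be a vertex of degree 1 with unique neighbor w, and let G' be the induced subgraph on V ∖ {u}. For a divisor D on G, define the divisor D' on G' by D'(w) = D(w) + D(u) and D'(x) = D(x) for all other vertices x. Then D is linearly equivalent to an effective divisor on G if and only if D' is linearly equivalent to an effective divisor on G'. -/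
open Finset

/-! Firing the leaf `u` only moves chips along the edge `uw`, so a firing script `f` on `G`
restricted to `G'` leaves the same divisor as on `G` away from `w`, while at `w` it also collects
whatever `f` leaves at `u`.  Conversely a script on `G'` extends to `G` by choosing its value at
`u` so that `u` is left with exactly zero chips. -/

section

variable {V : Type*} [Fintype V] (G : SimpleGraph V)

theorem lapApplyS_eq_sum_adj [DecidableRel G.Adj] (f : V → ℤ) (v : V) :
    lapApplyS G f v = ∑ x, if G.Adj v x then f v - f x else 0 := by
  classical
  have hdeg : (degS G v : ℤ) = #{x | G.Adj v x} := by
    rw [degS, Set.ncard_eq_toFinset_card']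
    simp
  have hterm : ∀ x, lapS G v x * f x
      = (if v = x then (degS G v : ℤ) * f v else 0) - (if G.Adj v x then f x else 0) := by
    intro x
    by_cases hvx : v = x
    · subst hvx; simp [lapS]
    · by_cases hadj : G.Adj v x <;> simp [lapS, hvx, hadj]
  simp only [lapApplyS, hterm, Finset.sum_sub_distrib, Finset.sum_ite_eq, Finset.mem_univ,
    if_true, ← Finset.sum_filter, hdeg, Finset.sum_const, nsmul_eq_mul, mul_comm]

theorem lapApplyS_of_adj_iff_eq {u w : V} (hleaf : ∀ y, G.Adj u y ↔ y = w) (f : V → ℤ) :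
    lapApplyS G f u = f u - f w := by
  classical
  simp [lapApplyS_eq_sum_adj, hleaf]

theorem lapApplyS_induce_ne [DecidableEq V] [DecidableRel G.Adj] (u : V) (f : V → ℤ)
    (x : {x : V | x ≠ u}) :
    lapApplyS (G.induce {x | x ≠ u}) (fun y => f y) x
      = lapApplyS G f x - if G.Adj x u then f x - f u else 0 := by
  rw [lapApplyS_eq_sum_adj, lapApplyS_eq_sum_adj, ← Finset.sum_erase_add _ _ (mem_univ u),
    add_sub_cancel_right]
  exact (Finset.sum_subtype _ (by simp) (fun y => if G.Adj x y then f x - f y else 0)).symm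

theorem sub_lapApplyS_induce_of_leaf [DecidableEq V] {u w : V} (hleaf : ∀ y, G.Adj u y ↔ y = w)
    (D f : V → ℤ) (x : {x : V | x ≠ u}) :
    (if (x : V) = w then D w + D u else D x) - lapApplyS (G.induce {x | x ≠ u}) (fun y => f y) x
      = D x - lapApplyS G f x + if (x : V) = w then D u - lapApplyS G f u else 0 := by
  classical
  have hadj : G.Adj x u ↔ (x : V) = w := G.adj_comm _ _ |>.trans (hleaf x)
  rw [lapApplyS_induce_ne, lapApplyS_of_adj_iff_eq G hleaf]
  simp only [hadj]
  split_ifs with hxw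
  · rw [hxw]; ring
  · ring

end

theorem winnable_iff_winnable_of_prune_leaf_general {V : Type*} [Fintype V] [DecidableEq V]
    (G : SimpleGraph V)
    (u w : V) (huw : G.Adj u w) (huniq : ∀ x, G.Adj u x → x = w)
    (D : V → ℤ) :
    WinnableS G D ↔
      WinnableS (SimpleGraph.induce {x : V | x ≠ u} G)
        (fun x => if (x : V) = w then D w + D u else D (x : V)) := by
  have hleaf : ∀ y, G.Adj u y ↔ y = w := fun y => ⟨huniq y, fun h => h ▸ huw⟩
  constructor
  · rintro ⟨f, hf⟩
    refine ⟨fun y => f y, fun x => ?_⟩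
    rw [sub_lapApplyS_induce_of_leaf G hleaf]
    split_ifs <;> linarith [hf x, hf u]
  · rintro ⟨g, hg⟩
    have hwu : w ≠ u := huw.ne'
    -- `f u - f w = D u`, so `u` is left with no chips
    set f : V → ℤ := fun x => if hx : x = u then g ⟨w, hwu⟩ + D u else g ⟨x, hx⟩
    have hfg : (fun y : {x : V | x ≠ u} => f y) = g := funext fun y => dif_neg y.2
    have hfu : D u - lapApplyS G f u = 0 := by
      rw [lapApplyS_of_adj_iff_eq G hleaf]
      simp [f, hwu]
    refine ⟨f, fun v => ?_⟩
    by_cases hv : v = u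
    · rw [hv, hfu]
    · have hslack := sub_lapApplyS_induce_of_leaf G hleaf D f ⟨v, hv⟩
      rw [hfg, hfu] at hslack
      simp only [ite_self, add_zero] at hslack
      linarith [hg ⟨v, hv⟩]

/-- **Pruning a leaf.**
Let `G` be a finite connected simple graph with at least two vertices, `u` a vertex of
degree `1` with unique neighbor `w`, and `G'` the induced subgraph on `V \ {u}`.
Define `D'` on `G'` by moving the value of `D` at `u` onto `w`.  Then `D` is linearly
equivalent to an effective divisor on `G` iff `D'` is so on `G'`. -/
theorem winnable_iff_winnable_of_prune_leaf {V : Type*} [Fintype V] [DecidableEq V]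
    (G : SimpleGraph V) (hconn : G.Connected) (hcard : 2 ≤ Fintype.card V)
    (u w : V) (huw : G.Adj u w) (huniq : ∀ x, G.Adj u x → x = w)
    (D : V → ℤ) :
    WinnableS G D ↔
      WinnableS (SimpleGraph.induce {x : V | x ≠ u} G)
        (fun x => if (x : V) = w then D w + D u else D (x : V)) :=
  winnable_iff_winnable_of_prune_leaf_general G u w huw huniq D
end

section
/- Let F be a field, let a_1, …, a_k ∈ F be distinct points, let n_1, …, n_k be nonnegative integers, and set N = n_1 + ⋯ + n_k and q(X) = Π_{i=1}^{k} (X − a_i)^{n_i}. Then the F-vector subspace of the field of rational functions F(X) consisting of all f such that q·f is a polynomial of degree at most N has dimension N + 1. (This is the Riemann–Roch space H⁰(P¹, D) of the divisor D = Σ n_i·a_i on the projective line, where none of the a_i is the point at infinity.) -/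
open Polynomial

/-- **Dimension of the Riemann–Roch space of `D = ∑ nᵢ·aᵢ` on `ℙ¹`.**
Let `F` be a field, `a₁, …, a_k ∈ F` distinct, `n₁, …, n_k ≥ 0`, `N = ∑ nᵢ` and
`q = ∏ (X - aᵢ)^{nᵢ}`.  The `F`-subspace of `F(X)` consisting of all `f` such that
`q · f` is a polynomial of degree at most `N` has dimension `N + 1`. -/
theorem riemann_roch_space_dimension {F : Type*} [Field F]
    (k : ℕ) (a : Fin k → F) (ha : Function.Injective a)
    (n : Fin k → ℕ) (N : ℕ) (hN : N = ∑ i, n i)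
    (q : Polynomial F) (hq : q = ∏ i, (X - C (a i)) ^ (n i))
    (W : Submodule F (RatFunc F))
    (hW : ∀ f : RatFunc F, f ∈ W ↔ ∃ p : Polynomial F,
        p.degree ≤ (N : ℕ) ∧
        algebraMap (Polynomial F) (RatFunc F) q * f
          = algebraMap (Polynomial F) (RatFunc F) p) :
    Module.finrank F W = N + 1 := by
  have hq0 : q ≠ 0 := by
    rw [hq]
    exact Finset.prod_ne_zero_iff.mpr fun i _ => pow_ne_zero _ (X_sub_C_ne_zero _)
  set A := algebraMap (Polynomial F) (RatFunc F) with hA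
  have hAinj : Function.Injective A := IsFractionRing.injective _ _
  have hAq : A q ≠ 0 := fun h => hq0 (hAinj (by simp [h]))
  let L : Polynomial F →ₗ[F] RatFunc F :=
    (A q)⁻¹ • (Algebra.linearMap (Polynomial F) (RatFunc F))
  have hL : ∀ p, L p = (A q)⁻¹ * A p := fun p => rfl
  have hdeg : ∀ p : Polynomial F, p ∈ degreeLT F (N + 1) ↔ p.degree ≤ (N : ℕ) := by
    intro p
    rw [mem_degreeLT]
    cases hd : p.degree with
    | bot =>
      refine iff_of_true ?_ bot_le
      exact bot_lt_iff_ne_bot.mpr (by exact_mod_cast WithBot.coe_ne_bot (a := N + 1))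
    | coe m =>
      simp only [Nat.cast_withBot, ← WithBot.coe_one, ← WithBot.coe_add,
        WithBot.coe_lt_coe, WithBot.coe_le_coe]
      exact Nat.lt_add_one_iff
  let L' : degreeLT F (N + 1) →ₗ[F] W :=
    LinearMap.codRestrict W (L.comp (Submodule.subtype _)) (fun x => by
      rw [hW]
      refine ⟨x, (hdeg x).mp x.2, ?_⟩
      rw [LinearMap.comp_apply, Submodule.subtype_apply, hL]
      field_simp)
  have hbij : Function.Bijective L' := by
    constructor
    · intro x y hxy
      have h1 : L x.1 = L y.1 := congrArg Subtype.val hxy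
      rw [hL, hL] at h1
      have h2 : A x.1 = A y.1 := by
        field_simp at h1
        exact h1
      exact Subtype.ext (hAinj h2)
    · rintro ⟨f, hf⟩
      obtain ⟨p, hp, hpf⟩ := (hW f).mp hf
      refine ⟨⟨p, (hdeg p).mpr hp⟩, ?_⟩
      apply Subtype.ext
      show L p = f
      rw [hL, ← hpf]
      field_simp
  have h1 := (LinearEquiv.ofBijective L' hbij).finrank_eq
  have h2 := (Polynomial.degreeLTEquiv F (N + 1)).finrank_eq
  rw [← h1, h2, Module.finrank_fin_fun]
end
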